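/- arXiv:1704.02344 — 6 statements merged into one kernel-verified Lean document; each statement's English description precedes it below -/
import Mathlib

section
/- For every integer n ≥ 3, one has n·(∫₀^{2π/n} −ln(2 sin θ) dθ + 2·∫₀^{(n−2)π/(2n)} −ln(2 sin θ) dθ) < 2π·ln(n/2). -/
set_option maxHeartbeats 1000000

open Real MeasureTheory intervalIntegral Set


lemma II.log1 {b : ℝ} (hb : 0 ≤ b) (h1 : b ≤ 1) : IntervalIntegrable Real.log volume 0 b := by
  have key : IntervalIntegrable (fun t : ℝ => -Real.log t) volume 0 b := by
    apply intervalIntegrable_deriv_of_nonneg (g := fun t => t - t * Real.log t)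
    · exact (continuous_id.sub continuous_mul_log).continuousOn
    · intro x hx
      rw [min_eq_left hb, max_eq_right hb] at hx
      have h2 : HasDerivAt (fun t : ℝ => t - t * Real.log t) (1 - (Real.log x + 1)) x :=
        (hasDerivAt_id x).sub (Real.hasDerivAt_mul_log (ne_of_gt hx.1))
      convert h2 using 1; ring
    · intro x hx
      rw [min_eq_left hb, max_eq_right hb] at hx
      have : Real.log x ≤ 0 := Real.log_nonpos hx.1.le (hx.2.le.trans h1)
      linarith
  have : (-(fun t : ℝ => -Real.log t)) = Real.log := by funext t; simp
  rw [← this]; exact key.neg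

lemma II.log0 {b : ℝ} (hb : 0 ≤ b) : IntervalIntegrable Real.log volume 0 b := by
  rcases le_total b 1 with h1 | h1
  · exact II.log1 hb h1
  · refine (II.log1 zero_le_one le_rfl).trans (intervalIntegrable_log ?_)
    rw [Set.uIcc_of_le h1]
    intro h
    exact absurd h.1 (by norm_num)

lemma intg_log0 {x : ℝ} (hx : 0 ≤ x) :
    ∫ t in (0:ℝ)..x, Real.log t = x * Real.log x - x := by
  have := intervalIntegral.integral_eq_sub_of_hasDeriv_right (a := 0) (b := x)
    (f := fun t => t * Real.log t - t) (f' := Real.log) ?_ ?_ ((II.log0 hx).mono_set ?_)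
  · simpa using this
  · rw [Set.uIcc_of_le hx]
    exact (continuous_mul_log.sub continuous_id).continuousOn
  · intro t ht
    rw [min_eq_left hx, max_eq_right hx] at ht
    have h2 : HasDerivAt (fun t : ℝ => t * Real.log t - t) (Real.log t + 1 - 1) t :=
      (Real.hasDerivAt_mul_log (ne_of_gt ht.1)).sub (hasDerivAt_id t)
    simpa using h2.hasDerivWithinAt
  · simp

lemma II.q_half : IntervalIntegrable (fun θ => Real.log (2 * Real.sin θ)) volume 0 (π/2) := by
  have hpi : 0 ≤ π/2 := by positivity
  constructor
  · apply Integrable.mono' (g := fun θ : ℝ => 2 + |Real.log θ|)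
    · exact (integrable_const 2).add ((II.log0 hpi).1.abs)
    · exact (Real.measurable_log.comp (measurable_const.mul Real.measurable_sin)).aestronglyMeasurable
    · filter_upwards [ae_restrict_mem measurableSet_Ioc] with θ hθ
      obtain ⟨h0, h2⟩ := hθ
      have hs : Real.sin θ > 0 := Real.sin_pos_of_pos_of_lt_pi h0 (lt_of_le_of_lt h2 (by linarith [Real.pi_pos]))
      have hlow : θ ≤ 2 * Real.sin θ := by
        have h3 := Real.mul_le_sin h0.le h2
        have h4 : (1:ℝ)/2 ≤ 2/π := by
          rw [div_le_div_iff₀ two_pos Real.pi_pos]; linarith [Real.pi_le_four]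
        nlinarith
      rw [Real.norm_eq_abs, abs_le]
      constructor
      · have : Real.log θ ≤ Real.log (2 * Real.sin θ) := Real.log_le_log h0 hlow
        have habs : -|Real.log θ| ≤ Real.log θ := neg_abs_le _
        linarith
      · have : Real.log (2 * Real.sin θ) ≤ Real.log 2 := by
          apply Real.log_le_log (by linarith) (by nlinarith [Real.sin_le_one θ])
        have h2' : Real.log 2 ≤ 1 := by
          nlinarith [Real.log_two_lt_d9, abs_nonneg (Real.log θ)]
        nlinarith [abs_nonneg (Real.log θ)]
  · rw [Ioc_eq_empty (by push_neg; positivity)]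
    exact integrableOn_empty

lemma II.q_pi : IntervalIntegrable (fun θ => Real.log (2 * Real.sin θ)) volume 0 π := by
  have r := II.q_half.comp_sub_left π
  simp only [Real.sin_pi_sub, sub_zero] at r
  have e : π - π/2 = π/2 := by ring
  rw [e] at r
  exact II.q_half.trans r.symm

lemma II.q {u v : ℝ} (h0 : 0 ≤ u) (h1 : u ≤ v) (h2 : v ≤ π) :
    IntervalIntegrable (fun θ => Real.log (2 * Real.sin θ)) volume u v := by
  apply II.q_pi.mono_set
  rw [Set.uIcc_of_le h1, Set.uIcc_of_le Real.pi_pos.le]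
  exact Set.Icc_subset_Icc h0 h2

lemma cos_eq (a : ℝ) : (∫ u in (0:ℝ)..a, Real.log (2 * Real.cos u)) =
    ∫ x in (π/2 - a)..(π/2), Real.log (2 * Real.sin x) := by
  have h := intervalIntegral.integral_comp_sub_left (a := 0) (b := a)
    (fun x => Real.log (2 * Real.sin x)) (π/2)
  simp only [Real.sin_pi_div_two_sub, sub_zero] at h
  exact h

lemma II.qc {a : ℝ} (h0 : 0 ≤ a) (h2 : a ≤ π/2) :
    IntervalIntegrable (fun u => Real.log (2 * Real.cos u)) volume 0 a := by
  have r := (II.q (u := π/2 - a) (v := π/2) (by linarith) (by linarith)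
    (by linarith [Real.pi_pos])).comp_sub_left (π/2)
  simp only [Real.sin_pi_div_two_sub] at r
  have e1 : π/2 - (π/2 - a) = a := by ring
  have e2 : π/2 - π/2 = (0:ℝ) := by ring
  rw [e1, e2] at r
  exact r.symm

lemma ae_ne_pt (c : ℝ) : ∀ᵐ x : ℝ, x ≠ c := by
  rw [MeasureTheory.ae_iff]
  have : {x : ℝ | ¬x ≠ c} = {c} := by ext x; simp
  rw [this]
  exact Real.volume_singleton

lemma double {a : ℝ} (h0 : 0 ≤ a) (h2 : a ≤ π/2) :
    (∫ θ in (0:ℝ)..(2*a), Real.log (2 * Real.sin θ)) =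
      2 * (∫ θ in (0:ℝ)..a, Real.log (2 * Real.sin θ)) +
      2 * ∫ u in (0:ℝ)..a, Real.log (2 * Real.cos u) := by
  have hsub := intervalIntegral.integral_comp_mul_left (a := 0) (b := a)
    (fun θ => Real.log (2 * Real.sin θ)) (c := 2) two_ne_zero
  simp only [mul_zero] at hsub
  have hcongr : (∫ x in (0:ℝ)..a, Real.log (2 * Real.sin (2 * x))) =
      ∫ x in (0:ℝ)..a, (Real.log (2 * Real.sin x) + Real.log (2 * Real.cos x)) := by
    apply intervalIntegral.integral_congr_ae
    filter_upwards [ae_ne_pt (π/2)] with x hx hmem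
    rw [Set.uIoc_of_le h0] at hmem
    have hx1 : 0 < x := hmem.1
    have hx2 : x < π/2 := lt_of_le_of_ne (hmem.2.trans h2) hx
    have hs : 0 < Real.sin x := Real.sin_pos_of_pos_of_lt_pi hx1 (by linarith [Real.pi_pos])
    have hc : 0 < Real.cos x := Real.cos_pos_of_mem_Ioo ⟨by linarith, hx2⟩
    have : 2 * Real.sin (2*x) = (2 * Real.sin x) * (2 * Real.cos x) := by
      rw [Real.sin_two_mul]; ring
    rw [this, Real.log_mul (by positivity) (by positivity)]
  have hadd : (∫ x in (0:ℝ)..a, (Real.log (2 * Real.sin x) + Real.log (2 * Real.cos x))) =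
      (∫ θ in (0:ℝ)..a, Real.log (2 * Real.sin θ)) + ∫ u in (0:ℝ)..a, Real.log (2 * Real.cos u) :=
    intervalIntegral.integral_add (II.q le_rfl h0 (by linarith [Real.pi_pos])) (II.qc h0 h2)
  rw [hcongr, hadd] at hsub
  rw [smul_eq_mul] at hsub
  linarith

lemma Jhalf : (∫ θ in (0:ℝ)..(π/2), Real.log (2 * Real.sin θ)) = 0 := by
  set J := ∫ θ in (0:ℝ)..(π/2), Real.log (2 * Real.sin θ) with hJ
  have hpi := Real.pi_pos
  have h1 : (∫ θ in (0:ℝ)..π, Real.log (2 * Real.sin θ)) = 2 * J := by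
    rw [← intervalIntegral.integral_add_adjacent_intervals (a := 0) (b := π/2) (c := π)
      (II.q le_rfl (by linarith) (by linarith)) (II.q (by linarith) (by linarith) le_rfl)]
    have r := intervalIntegral.integral_comp_sub_left (a := 0) (b := π/2)
      (fun x => Real.log (2 * Real.sin x)) π
    simp only [Real.sin_pi_sub, sub_zero] at r
    have e : π - π/2 = π/2 := by ring
    rw [e] at r
    rw [← r]
    ring
  have h2 := double (a := π/2) (by linarith) le_rfl
  have e : 2 * (π/2) = π := by ring
  rw [e, h1] at h2
  have h3 : (∫ u in (0:ℝ)..(π/2), Real.log (2 * Real.cos u)) = J := by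
    rw [cos_eq]
    simp [hJ]
  rw [h3] at h2
  linarith

lemma split_at {a : ℝ} (h0 : 0 ≤ a) (h2 : a ≤ π/2) :
    (∫ θ in (0:ℝ)..(π/2 - a), Real.log (2 * Real.sin θ)) =
      -∫ u in (0:ℝ)..a, Real.log (2 * Real.cos u) := by
  have hpi := Real.pi_pos
  have h := intervalIntegral.integral_add_adjacent_intervals (a := 0) (b := π/2 - a) (c := π/2)
    (f := fun θ => Real.log (2 * Real.sin θ))
    (II.q le_rfl (by linarith) (by linarith)) (II.q (by linarith) (by linarith) (by linarith))
  rw [Jhalf, ← cos_eq] at h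
  linarith

lemma lob_bound {x : ℝ} (h0 : 0 < x) (h1 : x ≤ 1) :
    (∫ θ in (0:ℝ)..x, -Real.log (2 * Real.sin θ)) ≤
      x - x * Real.log 2 - x * Real.log x + (16/225) * x^3 + (1/60) * x^4 := by
  have hpi4 : x ≤ π := h1.trans (by linarith [Real.pi_gt_three])
  have hmono : (∫ θ in (0:ℝ)..x, -Real.log (2 * Real.sin θ)) ≤
      ∫ θ in (0:ℝ)..x, (-Real.log 2 - Real.log θ + ((16/75) * θ^2 + (1/15) * θ^3)) := by
    apply intervalIntegral.integral_mono_ae_restrict h0.le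
    · exact (II.q le_rfl h0.le hpi4).neg
    · exact ((intervalIntegrable_const.sub (II.log0 h0.le)).add
        (((continuous_const.mul (continuous_pow 2)).add
          (continuous_const.mul (continuous_pow 3))).intervalIntegrable 0 x))
    · filter_upwards [ae_restrict_mem measurableSet_Icc, ae_restrict_of_ae (ae_ne_pt 0)]
        with θ hθ hne
      have ht0 : 0 < θ := lt_of_le_of_ne hθ.1 (Ne.symm hne)
      have ht1 : θ ≤ 1 := hθ.2.trans h1
      have hb := Real.sin_bound (x := θ) (by rw [abs_of_nonneg ht0.le]; exact ht1)
      have hb' : θ - θ^3/6 - θ^4 * (5/96) ≤ Real.sin θ := by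
        have := neg_le_of_abs_le hb
        rw [abs_of_nonneg ht0.le] at this
        have h54 : θ^5 ≤ θ^4 := pow_le_pow_of_le_one ht0.le ht1 (by norm_num)
        have h40 : 0 ≤ θ^4 := by positivity
        linarith
      obtain ⟨u, hu⟩ : ∃ u : ℝ, u = θ^2/6 + 5*θ^3/96 := ⟨_, rfl⟩
      have hu0 : 0 ≤ u := by rw [hu]; positivity
      have hu1 : u ≤ 7/32 := by
        have h2 : θ^2 ≤ 1 := by nlinarith
        have h3 : θ^3 ≤ 1 := by nlinarith
        rw [hu]; linarith
      have hfac : θ * (1 - u) = θ - θ^3/6 - θ^4 * (5/96) := by rw [hu]; ring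
      have hsin : θ * (1 - u) ≤ Real.sin θ := by rw [hfac]; exact hb'
      have hpos : 0 < θ * (1 - u) := by
        apply mul_pos ht0; linarith
      have hlog1 : Real.log (2 * (θ * (1 - u))) ≤ Real.log (2 * Real.sin θ) := by
        apply Real.log_le_log (by linarith) (by linarith)
      have hsplit : Real.log (2 * (θ * (1 - u))) =
          Real.log 2 + Real.log θ + Real.log (1 - u) := by
        rw [Real.log_mul two_ne_zero (ne_of_gt hpos), Real.log_mul (ne_of_gt ht0) (by linarith)]
        ring
      have hloglb : -Real.log (1 - u) ≤ (32/25) * u := by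
        have h1u : 0 < 1 - u := by linarith
        have hle := Real.log_le_sub_one_of_pos (inv_pos.mpr h1u)
        rw [Real.log_inv] at hle
        have hinv : (1 - u)⁻¹ ≤ 1 + (32/25) * u := by
          rw [inv_le_iff_one_le_mul₀ h1u]
          nlinarith [mul_nonneg hu0 (sub_nonneg.mpr hu1)]
        linarith
      have : -Real.log (2 * Real.sin θ) ≤ -Real.log 2 - Real.log θ + (32/25) * u := by
        have h5 : -Real.log (2 * Real.sin θ) ≤ -Real.log (2 * (θ * (1 - u))) :=
          neg_le_neg hlog1
        rw [hsplit] at h5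
        linarith
      calc -Real.log (2 * Real.sin θ) ≤ -Real.log 2 - Real.log θ + (32/25) * u := this
        _ = -Real.log 2 - Real.log θ + ((16/75) * θ^2 + (1/15) * θ^3) := by rw [hu]; ring
  have hval : (∫ θ in (0:ℝ)..x, (-Real.log 2 - Real.log θ + ((16/75) * θ^2 + (1/15) * θ^3))) =
      x - x * Real.log 2 - x * Real.log x + (16/225) * x^3 + (1/60) * x^4 := by
    rw [intervalIntegral.integral_add (f := fun θ => -Real.log 2 - Real.log θ)
      (g := fun θ => (16/75) * θ^2 + (1/15) * θ^3) (intervalIntegrable_const.sub (II.log0 h0.le))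
      (((continuous_const.mul (continuous_pow 2)).add
        ((continuous_const.mul (continuous_pow 3)))).intervalIntegrable 0 x),
      intervalIntegral.integral_sub intervalIntegrable_const (II.log0 h0.le),
      intg_log0 h0.le,
      intervalIntegral.integral_add (f := fun θ => (16/75) * θ^2) (g := fun θ => (1/15) * θ^3)
        ((continuous_const.mul (continuous_pow 2)).intervalIntegrable 0 x)
        ((continuous_const.mul (continuous_pow 3)).intervalIntegrable 0 x),
      intervalIntegral.integral_const_mul, intervalIntegral.integral_const_mul,
      integral_pow, integral_pow, intervalIntegral.integral_const]
    norm_num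
    ring
  linarith [hmono, hval.le, hval.ge]

lemma exp_lt_aux {c : ℝ} (hc : 0 < c) (hc1 : c < 1) : Real.exp c < 1 / (1 - c) := by
  have h3 := Real.add_one_lt_exp (show -c ≠ 0 by linarith)
  rw [Real.exp_neg] at h3
  have h4 : (Real.exp c)⁻¹ * Real.exp c = 1 := inv_mul_cancel₀ (ne_of_gt (Real.exp_pos _))
  have h5 := Real.exp_pos c
  rw [lt_div_iff₀ (by linarith)]
  nlinarith

lemma log_pi_gt : (1.06:ℝ) < Real.log π := by
  rw [show (1.06:ℝ) = 1 + 0.06 by norm_num, Real.lt_log_iff_exp_lt Real.pi_pos, Real.exp_add]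
  have h1 := Real.exp_one_lt_d9
  have h2 := exp_lt_aux (show (0:ℝ) < 0.06 by norm_num) (by norm_num)
  have h5 := Real.exp_pos (0.06:ℝ)
  nlinarith [Real.pi_gt_d6, Real.exp_pos 1]

lemma log_three_gt : (1.09:ℝ) < Real.log 3 := by
  rw [show (1.09:ℝ) = 1 + 0.09 by norm_num, Real.lt_log_iff_exp_lt (by norm_num), Real.exp_add]
  have h1 := Real.exp_one_lt_d9
  have h2 := exp_lt_aux (show (0:ℝ) < 0.09 by norm_num) (by norm_num)
  have h5 := Real.exp_pos (0.09:ℝ)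
  nlinarith [Real.exp_pos 1]

lemma reduction {a : ℝ} (h0 : 0 < a) (h2 : a ≤ π/2) :
    (∫ θ in (0:ℝ)..(2*a), -Real.log (2 * Real.sin θ)) +
      2 * (∫ θ in (0:ℝ)..(π/2 - a), -Real.log (2 * Real.sin θ)) =
      2 * ∫ θ in (0:ℝ)..a, -Real.log (2 * Real.sin θ) := by
  rw [intervalIntegral.integral_neg, intervalIntegral.integral_neg, intervalIntegral.integral_neg,
    double h0.le h2, split_at h0.le h2]
  ring

theorem bipyramid_volume_lt (n : ℕ) (hn : 3 ≤ n) :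
    (n : ℝ) * ((∫ θ in (0:ℝ)..(2 * π / n), -Real.log (2 * Real.sin θ)) +
      2 * ∫ θ in (0:ℝ)..(((n : ℝ) - 2) * π / (2 * n)), -Real.log (2 * Real.sin θ)) <
    2 * π * Real.log ((n : ℝ) / 2) := by
  have hpi := Real.pi_pos
  have hN3 : (3:ℝ) ≤ (n:ℝ) := by exact_mod_cast hn
  have hNpos : (0:ℝ) < n := by linarith
  have hNne : (n:ℝ) ≠ 0 := ne_of_gt hNpos
  obtain ⟨a, ha⟩ : ∃ a : ℝ, a = π / n := ⟨_, rfl⟩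
  have h0 : 0 < a := by rw [ha]; positivity
  have h2 : a ≤ π/2 := by
    rw [ha, div_le_div_iff₀ hNpos two_pos]
    nlinarith
  have e2 : 2 * π / (n:ℝ) = 2 * a := by rw [ha]; ring
  have e3 : ((n:ℝ) - 2) * π / (2 * n) = π/2 - a := by
    rw [ha]; field_simp
  rw [e2, e3, reduction h0 h2]
  have hNa : (n:ℝ) * a = π := by rw [ha]; field_simp
  have hlogN2 : Real.log ((n:ℝ)/2) = Real.log n - Real.log 2 := Real.log_div hNne two_ne_zero
  rcases eq_or_lt_of_le hn with h3 | h4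
  · -- n = 3
    subst h3
    have hpi32 : π ≤ 3.15 := by linarith [Real.pi_lt_d2]
    have h1a : (1:ℝ) ≤ a := by
      rw [ha]; rw [le_div_iff₀ hNpos]
      push_cast
      nlinarith [Real.pi_gt_d6]
    have hi1 : IntervalIntegrable (fun θ => -Real.log (2 * Real.sin θ)) volume 0 1 :=
      (II.q le_rfl zero_le_one (by linarith)).neg
    have hi2 : IntervalIntegrable (fun θ => -Real.log (2 * Real.sin θ)) volume 1 a :=
      (II.q zero_le_one h1a (by linarith)).neg
    have hsplit : (∫ θ in (0:ℝ)..a, -Real.log (2 * Real.sin θ)) =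
        (∫ θ in (0:ℝ)..1, -Real.log (2 * Real.sin θ)) +
        ∫ θ in (1:ℝ)..a, -Real.log (2 * Real.sin θ) :=
      (intervalIntegral.integral_add_adjacent_intervals hi1 hi2).symm
    have hb1 : (∫ θ in (0:ℝ)..1, -Real.log (2 * Real.sin θ)) ≤ 1 - Real.log 2 + 79/900 := by
      have h := lob_bound one_pos le_rfl
      norm_num [Real.log_one] at h
      rw [intervalIntegral.integral_neg]
      linarith
    have hb2 : (∫ θ in (1:ℝ)..a, -Real.log (2 * Real.sin θ)) ≤ 0 := by
      have hm : (∫ θ in (1:ℝ)..a, -Real.log (2 * Real.sin θ)) ≤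
          ∫ _ in (1:ℝ)..a, (0:ℝ) := by
        apply intervalIntegral.integral_mono_on h1a hi2 intervalIntegrable_const
        intro θ hθ
        have hsin1 : (25:ℝ)/32 ≤ Real.sin 1 := by
          have hb := Real.sin_bound (x := 1) (by norm_num)
          have := neg_le_of_abs_le hb
          norm_num at this ⊢
          linarith
        have hmono : Real.sin 1 ≤ Real.sin θ := by
          apply Real.strictMonoOn_sin.monotoneOn ?_ ?_ hθ.1
          · constructor <;> [linarith; linarith]
          · constructor
            · linarith [hθ.1]
            · linarith [hθ.2, h2]
        have hge : (1:ℝ) ≤ 2 * Real.sin θ := by linarith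
        show -Real.log (2 * Real.sin θ) ≤ 0
        have := Real.log_nonneg hge
        linarith
      simpa using hm
    have hI : (∫ θ in (0:ℝ)..a, -Real.log (2 * Real.sin θ)) ≤ 1 - Real.log 2 + 79/900 := by
      rw [hsplit]; linarith
    push_cast
    have hlog2u := Real.log_two_lt_d9
    have hlog2l := Real.log_two_gt_d9
    have hlog3 := log_three_gt
    have hlog32 : Real.log ((3:ℝ)/2) = Real.log 3 - Real.log 2 := by
      rw [Real.log_div (by norm_num) (by norm_num)]
    rw [hlog32]
    have h7 : (2*3.141592)*(0.3968:ℝ) < (2*π)*(Real.log 3 - Real.log 2) := by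
      apply mul_lt_mul'' (by nlinarith [Real.pi_gt_d6]) (by nlinarith) (by norm_num) (by norm_num)
    linarith [hI, h7, hlog2l]
  · -- n ≥ 4
    have hN4 : (4:ℝ) ≤ (n:ℝ) := by exact_mod_cast h4
    have hpi32 : π ≤ 3.15 := by linarith [Real.pi_lt_d2]
    have ha78 : a ≤ 0.7875 := by
      rw [ha, div_le_iff₀ hNpos]; nlinarith
    have ha1 : a ≤ 1 := by linarith
    have hB := lob_bound h0 ha1
    have hloga : Real.log a = Real.log π - Real.log n := by
      rw [ha, Real.log_div (ne_of_gt hpi) hNne]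
    have e1 : 2*(n:ℝ)*(a - a*Real.log 2 - a*Real.log a + (16/225)*a^3 + (1/60)*a^4)
        = 2*π - 2*π*Real.log 2 - 2*π*Real.log a + (32/225)*π*a^2 + (1/30)*π*a^3 := by
      linear_combination (2 - 2*Real.log 2 - 2*Real.log a + (32/225)*a^2 + (1/30)*a^3) * hNa
    have ha2 : a^2 ≤ 0.62016 := by nlinarith [ha78, h0]
    have ha3 : a^3 ≤ 0.4884 := by
      have hc : 0 ≤ a^2 * (0.7875 - a) := mul_nonneg (sq_nonneg a) (by linarith)
      nlinarith [hc, ha2]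
    have hkey : 2 - 2*Real.log π + (32/225)*a^2 + (1/30)*a^3 < 0 := by
      linarith [log_pi_gt]
    have hfin : 2*π - 2*π*Real.log 2 - 2*π*Real.log a + (32/225)*π*a^2 + (1/30)*π*a^3 <
        2*π*(Real.log n - Real.log 2) := by
      rw [hloga]
      nlinarith [mul_neg_of_neg_of_pos hkey hpi]
    rw [hlogN2]
    calc (n:ℝ) * (2 * ∫ θ in (0:ℝ)..a, -Real.log (2 * Real.sin θ))
        ≤ (n:ℝ) * (2 * (a - a*Real.log 2 - a*Real.log a + (16/225)*a^3 + (1/60)*a^4)) := by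
          apply mul_le_mul_of_nonneg_left (by linarith) hNpos.le
      _ = 2*(n:ℝ)*(a - a*Real.log 2 - a*Real.log a + (16/225)*a^3 + (1/60)*a^4) := by ring
      _ = 2*π - 2*π*Real.log 2 - 2*π*Real.log a + (32/225)*π*a^2 + (1/30)*π*a^3 := e1
      _ < 2*π*(Real.log n - Real.log 2) := hfin
end

section
/- The inequality vol(Bₙ) < 2π·ln(n/2) is asymptotically sharp: with vol(Bₙ) = n·(∫₀^{2π/n} −ln(2 sin θ) dθ + 2·∫₀^{(n−2)π/(2n)} −ln(2 sin θ) dθ), the ratio vol(Bₙ)/(2π·ln(n/2)) tends to 1 as n → ∞. -/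
open Real

open MeasureTheory intervalIntegral Set Filter

lemma intIntLog {x : ℝ} (hx : 0 ≤ x) : IntervalIntegrable Real.log volume 0 x := by
  rw [intervalIntegrable_iff_integrableOn_Ioc_of_le hx]
  have hg : IntegrableOn (fun θ : ℝ => 2 * θ ^ (-(1/2) : ℝ) + x) (Ioc 0 x) volume := by
    apply Integrable.add
    · have := (intervalIntegrable_rpow' (a := 0) (b := x) (r := -(1/2)) (by norm_num)).const_mul 2
      rw [intervalIntegrable_iff_integrableOn_Ioc_of_le hx] at this
      exact this
    · exact integrableOn_const measure_Ioc_lt_top.ne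
  refine Integrable.mono' hg (Real.measurable_log.aestronglyMeasurable) ?_
  filter_upwards [ae_restrict_mem measurableSet_Ioc] with θ hθ
  obtain ⟨h0, hx'⟩ := hθ
  have hrp : (0:ℝ) ≤ θ ^ (-(1/2) : ℝ) := Real.rpow_nonneg h0.le _
  rcases le_or_gt θ 1 with h1 | h1
  · have hlog : Real.log (θ ^ (-(1/2) : ℝ)) ≤ θ ^ (-(1/2) : ℝ) - 1 :=
      Real.log_le_sub_one_of_pos (Real.rpow_pos_of_pos h0 _)
    rw [Real.log_rpow h0] at hlog
    have : -Real.log θ ≤ 2 * θ ^ (-(1/2) : ℝ) := by nlinarith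
    have hle : Real.log θ ≤ 0 := Real.log_nonpos h0.le h1
    rw [Real.norm_eq_abs, abs_of_nonpos hle]
    nlinarith
  · have : Real.log θ ≤ θ - 1 := Real.log_le_sub_one_of_pos h0
    rw [Real.norm_eq_abs, abs_of_nonneg (Real.log_nonneg h1.le)]
    nlinarith

lemma intIntLogMul {c x : ℝ} (hc : 0 < c) (hx : 0 ≤ x) :
    IntervalIntegrable (fun θ : ℝ => Real.log (c * θ)) volume 0 x := by
  have := (intIntLog (x := c * x) (by positivity)).comp_mul_left (c := c)
  simpa [hc.ne'] using this

lemma integral_log_mul {c x : ℝ} (hc : 0 < c) (hx : 0 ≤ x) :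
    ∫ θ in (0:ℝ)..x, Real.log (c * θ) = x * Real.log (c * x) - x := by
  have key : ∫ θ in (0:ℝ)..x, Real.log (c * θ)
      = (fun θ : ℝ => (1/c) * ((c*θ) * Real.log (c*θ)) - θ) x
        - (fun θ : ℝ => (1/c) * ((c*θ) * Real.log (c*θ)) - θ) 0 := by
    apply integral_eq_sub_of_hasDeriv_right_of_le hx
    · apply ContinuousOn.sub
      · exact (continuousOn_const.mul ((Real.continuous_mul_log.comp
          (continuous_const.mul continuous_id)).continuousOn))
      · exact continuousOn_id
    · intro θ hθ
      have hθ0 : 0 < θ := hθ.1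
      have h1 : HasDerivAt (fun y : ℝ => y * Real.log y) (Real.log (c*θ) + 1) (c*θ) :=
        Real.hasDerivAt_mul_log (by positivity)
      have h2 : HasDerivAt (fun θ : ℝ => (c*θ) * Real.log (c*θ))
          ((Real.log (c*θ) + 1) * c) θ :=
        by simpa [Function.comp_def] using h1.comp θ (by simpa using (hasDerivAt_id θ).const_mul c)
      have h3 : HasDerivAt (fun θ : ℝ => (1/c) * ((c*θ) * Real.log (c*θ)) - θ)
          ((1/c) * ((Real.log (c*θ) + 1) * c) - 1) θ := (h2.const_mul (1/c)).sub (hasDerivAt_id θ)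
      have : (1/c) * ((Real.log (c*θ) + 1) * c) - 1 = Real.log (c * θ) := by
        field_simp
        ring
      rw [this] at h3
      exact h3.hasDerivWithinAt
    · exact intIntLogMul hc hx
  rw [key]
  simp
  field_simp

lemma intIntLogSin {x : ℝ} (hx0 : 0 ≤ x) (hx : x ≤ π/2) :
    IntervalIntegrable (fun θ : ℝ => Real.log (Real.sin θ)) volume 0 x := by
  rw [intervalIntegrable_iff_integrableOn_Ioc_of_le hx0]
  have h1 : IntegrableOn (fun θ : ℝ => Real.log θ) (Ioc 0 x) volume := by
    have := intIntLog hx0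
    rwa [intervalIntegrable_iff_integrableOn_Ioc_of_le hx0] at this
  have h2 : IntegrableOn (fun θ : ℝ => Real.log ((2/π) * θ)) (Ioc 0 x) volume := by
    have := intIntLogMul (c := 2/π) (by positivity) hx0
    rwa [intervalIntegrable_iff_integrableOn_Ioc_of_le hx0] at this
  refine Integrable.mono' (h1.norm.add h2.norm)
    ((Real.measurable_log.comp Real.continuous_sin.measurable).aestronglyMeasurable) ?_
  filter_upwards [ae_restrict_mem measurableSet_Ioc] with θ hθ
  obtain ⟨h0, hxx⟩ := hθ
  have hθpi : θ < π := lt_of_le_of_lt (hxx.trans hx) (by linarith [Real.pi_pos])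
  have hs : 0 < Real.sin θ := Real.sin_pos_of_pos_of_lt_pi h0 hθpi
  have hub : Real.log (Real.sin θ) ≤ Real.log θ :=
    Real.log_le_log hs (Real.sin_le h0.le)
  have hlb : Real.log ((2/π) * θ) ≤ Real.log (Real.sin θ) := by
    apply Real.log_le_log (by positivity)
    exact Real.mul_le_sin h0.le (hxx.trans hx)
  rw [Real.norm_eq_abs, abs_le]
  constructor
  · calc -(|Real.log θ| + |Real.log ((2/π) * θ)|)
        ≤ -(|Real.log ((2/π) * θ)|) := by simp [abs_nonneg]
      _ ≤ Real.log ((2/π) * θ) := neg_abs_le _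
      _ ≤ _ := hlb
  · calc Real.log (Real.sin θ) ≤ Real.log θ := hub
      _ ≤ |Real.log θ| := le_abs_self _
      _ ≤ _ := by simp [abs_nonneg]

lemma intIntLogSinUpper : IntervalIntegrable (fun θ : ℝ => Real.log (Real.sin θ)) volume (π/2) π := by
  have h1 := intIntLogSin (x := π/2) (by positivity) le_rfl
  have := (h1.comp_sub_left π).symm
  have heq : (fun x : ℝ => Real.log (Real.sin (π - x))) = fun x : ℝ => Real.log (Real.sin x) := by
    funext x; rw [Real.sin_pi_sub]
  have e1 : π - π/2 = π/2 := by ring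
  have e2 : π - 0 = π := by ring
  rw [heq, e2, e1] at this
  exact this

lemma intIntLogSinPi : IntervalIntegrable (fun θ : ℝ => Real.log (Real.sin θ)) volume 0 π :=
  (intIntLogSin (by positivity) le_rfl).trans intIntLogSinUpper

lemma intIntLogCos : IntervalIntegrable (fun θ : ℝ => Real.log (Real.cos θ)) volume 0 (π/2) := by
  have h1 := ((intIntLogSin (x := π/2) (by positivity) le_rfl).comp_sub_left (π/2)).symm
  have heq : (fun x : ℝ => Real.log (Real.sin (π/2 - x)))
      = fun x : ℝ => Real.log (Real.cos x) := by
    funext x; rw [Real.sin_pi_div_two_sub]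
  have e1 : π/2 - π/2 = 0 := by ring
  have e2 : π/2 - 0 = π/2 := by ring
  rw [heq, e1, e2] at h1
  exact h1

lemma euler_log_sin : ∫ θ in (0:ℝ)..(π/2), Real.log (Real.sin θ) = -(π/2) * Real.log 2 := by
  set J := ∫ θ in (0:ℝ)..(π/2), Real.log (Real.sin θ) with hJ
  have h1 := intIntLogSin (x := π/2) (by positivity) le_rfl
  -- Step A : ∫ 0..π = 2 J
  have hsplit : ∫ θ in (0:ℝ)..π, Real.log (Real.sin θ)
      = J + ∫ θ in (π/2:ℝ)..π, Real.log (Real.sin θ) := by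
    rw [hJ, integral_add_adjacent_intervals h1 intIntLogSinUpper]
  have hA : ∫ θ in (π/2:ℝ)..π, Real.log (Real.sin θ) = J := by
    have := integral_comp_sub_left (a := (0:ℝ)) (b := π/2)
      (fun θ : ℝ => Real.log (Real.sin θ)) π
    have e1 : π - π/2 = π/2 := by ring
    have e2 : π - 0 = π := by ring
    rw [e1, e2] at this
    rw [← this, hJ]
    congr 1
    funext x
    rw [Real.sin_pi_sub]
  -- Step B : substitution 2u
  have hB : ∫ θ in (0:ℝ)..π, Real.log (Real.sin θ)
      = 2 * ∫ u in (0:ℝ)..(π/2), Real.log (Real.sin (2*u)) := by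
    have := integral_comp_mul_left (a := (0:ℝ)) (b := π/2)
      (fun θ : ℝ => Real.log (Real.sin θ)) (c := 2) two_ne_zero
    have e1 : (2:ℝ) * 0 = 0 := by ring
    have e2 : (2:ℝ) * (π/2) = π := by ring
    rw [e1, e2, smul_eq_mul] at this
    rw [this]
    ring
  -- Step C : double angle
  have hC : ∫ u in (0:ℝ)..(π/2), Real.log (Real.sin (2*u))
      = ∫ u in (0:ℝ)..(π/2), (Real.log 2 + Real.log (Real.sin u) + Real.log (Real.cos u)) := by
    apply intervalIntegral.integral_congr_ae
    have hsub : {x : ℝ | ¬(x ∈ Set.uIoc (0:ℝ) (π/2) → Real.log (Real.sin (2*x))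
        = Real.log 2 + Real.log (Real.sin x) + Real.log (Real.cos x))} ⊆ {π/2} := by
      intro x hx
      simp only [mem_setOf_eq, _root_.not_imp] at hx
      obtain ⟨hmem, hne⟩ := hx
      rw [uIoc_of_le (by positivity)] at hmem
      by_contra hxe
      simp only [mem_singleton_iff] at hxe
      have hx0 : 0 < x := hmem.1
      have hx2 : x < π/2 := lt_of_le_of_ne hmem.2 hxe
      have hs : 0 < Real.sin x := Real.sin_pos_of_pos_of_lt_pi hx0 (by linarith [Real.pi_pos])
      have hc : 0 < Real.cos x := Real.cos_pos_of_mem_Ioo ⟨by linarith, hx2⟩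
      apply hne
      rw [Real.sin_two_mul, Real.log_mul (by positivity) hc.ne',
        Real.log_mul two_ne_zero hs.ne']
    exact ae_iff.2 (measure_mono_null hsub Real.volume_singleton)
  have hCos : ∫ u in (0:ℝ)..(π/2), Real.log (Real.cos u) = J := by
    have := integral_comp_sub_left (a := (0:ℝ)) (b := π/2)
      (fun θ : ℝ => Real.log (Real.sin θ)) (π/2)
    have e1 : π/2 - π/2 = 0 := by ring
    have e2 : π/2 - 0 = π/2 := by ring
    rw [e1, e2] at this
    rw [hJ, ← this]
    congr 1
    funext x
    rw [Real.sin_pi_div_two_sub]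
  have hsum : ∫ u in (0:ℝ)..(π/2), (Real.log 2 + Real.log (Real.sin u) + Real.log (Real.cos u))
      = (π/2) * Real.log 2 + J + J := by
    rw [intervalIntegral.integral_add ((intervalIntegrable_const (c := Real.log 2)).add h1) intIntLogCos,
      intervalIntegral.integral_add (intervalIntegrable_const (c := Real.log 2)) h1,
      intervalIntegral.integral_const, hCos]
    simp only [sub_zero, smul_eq_mul, hJ]
  rw [hA] at hsplit
  rw [hC, hsum] at hB
  linarith

lemma intIntLog2Sin {x : ℝ} (hx0 : 0 ≤ x) (hx : x ≤ π/2) :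
    IntervalIntegrable (fun θ : ℝ => Real.log (2 * Real.sin θ)) volume 0 x := by
  rw [intervalIntegrable_iff_integrableOn_Ioc_of_le hx0]
  have hg : IntegrableOn (fun θ : ℝ => Real.log 2 + Real.log (Real.sin θ)) (Ioc 0 x) volume := by
    have : IntervalIntegrable (fun θ : ℝ => Real.log 2 + Real.log (Real.sin θ)) volume 0 x :=
      intervalIntegrable_const.add (intIntLogSin hx0 hx)
    rwa [intervalIntegrable_iff_integrableOn_Ioc_of_le hx0] at this
  apply hg.congr_fun ?_ measurableSet_Ioc
  intro θ hθ
  have hpi : (0:ℝ) < π := Real.pi_pos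
  have hs : 0 < Real.sin θ := Real.sin_pos_of_pos_of_lt_pi hθ.1 (by linarith [hθ.2.trans hx])
  simp only []
  rw [Real.log_mul two_ne_zero hs.ne']

lemma eq_log2sin {x : ℝ} (hx0 : 0 ≤ x) (hx : x ≤ π/2) :
    ∫ θ in (0:ℝ)..x, Real.log (2 * Real.sin θ)
      = x * Real.log 2 + ∫ θ in (0:ℝ)..x, Real.log (Real.sin θ) := by
  have h1 : ∫ θ in (0:ℝ)..x, Real.log (2 * Real.sin θ)
      = ∫ θ in (0:ℝ)..x, (Real.log 2 + Real.log (Real.sin θ)) := by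
    apply intervalIntegral.integral_congr_ae
    filter_upwards with θ hθ
    rw [uIoc_of_le hx0] at hθ
    have hpi : (0:ℝ) < π := Real.pi_pos
    have hs : 0 < Real.sin θ := Real.sin_pos_of_pos_of_lt_pi hθ.1 (by linarith [hθ.2.trans hx])
    rw [Real.log_mul two_ne_zero hs.ne']
  rw [h1, intervalIntegral.integral_add intervalIntegrable_const (intIntLogSin hx0 hx),
    intervalIntegral.integral_const]
  simp [smul_eq_mul]

lemma lambda_pi_div_two : ∫ θ in (0:ℝ)..(π/2), -Real.log (2 * Real.sin θ) = 0 := by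
  rw [intervalIntegral.integral_neg, eq_log2sin (by positivity) le_rfl, euler_log_sin]
  ring

lemma I1_bounds {x : ℝ} (hx0 : 0 < x) (hx : x ≤ π/2) :
    x - x * Real.log (2*x) ≤ (∫ θ in (0:ℝ)..x, -Real.log (2*Real.sin θ)) ∧
    (∫ θ in (0:ℝ)..x, -Real.log (2*Real.sin θ)) ≤ x - x * Real.log ((4/π)*x) := by
  have hpi : (0:ℝ) < π := Real.pi_pos
  have hmid := (intIntLog2Sin hx0.le hx).neg
  constructor
  · have hmono : ∀ θ ∈ Icc (0:ℝ) x, -Real.log (2*θ) ≤ -Real.log (2*Real.sin θ) := by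
      intro θ hθ
      rcases eq_or_lt_of_le hθ.1 with h | h
      · simp [← h]
      · have hs : 0 < Real.sin θ := Real.sin_pos_of_pos_of_lt_pi h (by linarith [hθ.2.trans hx])
        apply neg_le_neg
        apply Real.log_le_log (by positivity)
        have := Real.sin_le h.le
        linarith
    have := intervalIntegral.integral_mono_on hx0.le (intIntLogMul two_pos hx0.le).neg hmid hmono
    calc x - x * Real.log (2*x) = -(x * Real.log (2*x) - x) := by ring
      _ = ∫ θ in (0:ℝ)..x, -Real.log (2*θ) := by
          rw [intervalIntegral.integral_neg, integral_log_mul two_pos hx0.le]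
      _ ≤ _ := this
  · have hmono : ∀ θ ∈ Icc (0:ℝ) x, -Real.log (2*Real.sin θ) ≤ -Real.log ((4/π)*θ) := by
      intro θ hθ
      rcases eq_or_lt_of_le hθ.1 with h | h
      · simp [← h]
      · have hθ2 : θ ≤ π/2 := hθ.2.trans hx
        have hs : 0 < Real.sin θ := Real.sin_pos_of_pos_of_lt_pi h (by linarith)
        apply neg_le_neg
        apply Real.log_le_log (by positivity)
        have := Real.mul_le_sin h.le hθ2
        calc (4/π)*θ = 2 * (2/π * θ) := by ring
          _ ≤ 2 * Real.sin θ := by linarith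
    have := intervalIntegral.integral_mono_on hx0.le hmid
      (intIntLogMul (c := 4/π) (by positivity) hx0.le).neg hmono
    calc (∫ θ in (0:ℝ)..x, -Real.log (2*Real.sin θ)) ≤ ∫ θ in (0:ℝ)..x, -Real.log ((4/π)*θ) := this
      _ = -(x * Real.log ((4/π)*x) - x) := by
          rw [intervalIntegral.integral_neg, integral_log_mul (by positivity) hx0.le]
      _ = x - x * Real.log ((4/π)*x) := by ring

lemma I2_bounds {y : ℝ} (hy1 : π/4 ≤ y) (hy2 : y ≤ π/2) :
    0 ≤ (∫ θ in (0:ℝ)..y, -Real.log (2*Real.sin θ)) ∧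
    (∫ θ in (0:ℝ)..y, -Real.log (2*Real.sin θ)) ≤ (π/2 - y) * Real.log 2 := by
  have hpi : (0:ℝ) < π := Real.pi_pos
  have hy0 : 0 ≤ y := le_trans (by positivity) hy1
  have hfull : IntervalIntegrable (fun θ : ℝ => -Real.log (2*Real.sin θ)) volume 0 (π/2) := by
    exact (intIntLog2Sin (x := π/2) (by positivity) le_rfl).neg
  have hup : IntervalIntegrable (fun θ : ℝ => -Real.log (2*Real.sin θ)) volume y (π/2) :=
    hfull.mono_set (by rw [uIcc_of_le hy2, uIcc_of_le (by positivity)]; exact Icc_subset_Icc hy0 le_rfl)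
  have hlow : IntervalIntegrable (fun θ : ℝ => -Real.log (2*Real.sin θ)) volume 0 y :=
    hfull.mono_set (by rw [uIcc_of_le hy0, uIcc_of_le (by positivity)]; exact Icc_subset_Icc le_rfl hy2)
  have hsplit : (∫ θ in (0:ℝ)..y, -Real.log (2*Real.sin θ))
      + (∫ θ in y..(π/2), -Real.log (2*Real.sin θ)) = 0 := by
    rw [intervalIntegral.integral_add_adjacent_intervals hlow hup]
    exact lambda_pi_div_two
  have key : (∫ θ in (0:ℝ)..y, -Real.log (2*Real.sin θ))
      = ∫ θ in y..(π/2), Real.log (2*Real.sin θ) := by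
    simp only [intervalIntegral.integral_neg] at hsplit ⊢
    linarith
  -- bounds on [y, π/2]
  have hptlo : ∀ θ ∈ Icc y (π/2), (0:ℝ) ≤ Real.log (2*Real.sin θ) := by
    intro θ hθ
    apply Real.log_nonneg
    have h4 : π/4 ≤ θ := hy1.trans hθ.1
    have hmono := Real.strictMonoOn_sin.monotoneOn (a := π/4) (b := θ)
      ⟨by linarith, by linarith⟩ ⟨by linarith, hθ.2⟩ h4
    rw [Real.sin_pi_div_four] at hmono
    have h2 : (1:ℝ) ≤ Real.sqrt 2 := by
      rw [show (1:ℝ) = Real.sqrt 1 by simp]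
      exact Real.sqrt_le_sqrt (by norm_num)
    have : Real.sqrt 2 / 2 ≤ Real.sin θ := hmono
    nlinarith [Real.sq_sqrt (by norm_num : (2:ℝ) ≥ 0)]
  have hpthi : ∀ θ ∈ Icc y (π/2), Real.log (2*Real.sin θ) ≤ Real.log 2 := by
    intro θ hθ
    have h4 : π/4 ≤ θ := hy1.trans hθ.1
    have hs : 0 < Real.sin θ := Real.sin_pos_of_pos_of_lt_pi (by linarith) (by linarith [hθ.2])
    apply Real.log_le_log (by positivity)
    have := Real.sin_le_one θ
    linarith
  have hint : IntervalIntegrable (fun θ : ℝ => Real.log (2*Real.sin θ)) volume y (π/2) := by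
    have h := hup.neg
    have e : (-fun θ : ℝ => -Real.log (2*Real.sin θ)) = (fun θ : ℝ => Real.log (2*Real.sin θ)) := by
      funext θ; simp
    rwa [e] at h
  have hyle : y ≤ π/2 := hy2
  have hlo := intervalIntegral.integral_mono_on hyle
    (intervalIntegrable_const (c := (0:ℝ))) hint hptlo
  have hhi := intervalIntegral.integral_mono_on hyle hint
    (intervalIntegrable_const (c := Real.log 2)) hpthi
  rw [intervalIntegral.integral_const, smul_eq_mul, mul_zero] at hlo
  rw [intervalIntegral.integral_const, smul_eq_mul] at hhi
  rw [key]
  exact ⟨hlo, hhi⟩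

/-- The volume of the regular ideal `n`-bipyramid. -/
noncomputable def volB (n : ℕ) : ℝ :=
  (n : ℝ) * ((∫ θ in (0:ℝ)..(2 * π / n), -Real.log (2 * Real.sin θ)) +
    2 * ∫ θ in (0:ℝ)..(((n : ℝ) - 2) * π / (2 * n)), -Real.log (2 * Real.sin θ))

lemma volB_bounds {n : ℕ} (hn : 4 ≤ n) :
    2*π - 2*π*Real.log (4*π/(n:ℝ)) ≤ volB n ∧
    volB n ≤ 2*π - 2*π*Real.log (8/(n:ℝ)) + 2*π*Real.log 2 := by
  have hpi : (0:ℝ) < π := Real.pi_pos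
  have hN : (4:ℝ) ≤ (n:ℝ) := by exact_mod_cast hn
  have hN0 : (0:ℝ) < (n:ℝ) := by linarith
  set N := (n:ℝ)
  set x := 2 * π / N with hxdef
  have hx0 : 0 < x := by positivity
  have hx2 : x ≤ π/2 := by
    rw [hxdef, div_le_div_iff₀ hN0 (by norm_num)]
    nlinarith
  set y := (N - 2) * π / (2 * N) with hydef
  have hyval : y = π/2 - π/N := by
    rw [hydef]; field_simp
  have hy1 : π/4 ≤ y := by
    rw [hyval]
    have : π/N ≤ π/4 := by
      rw [div_le_div_iff₀ hN0 (by norm_num)]; nlinarith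
    linarith
  have hy2 : y ≤ π/2 := by
    rw [hyval]
    have : 0 ≤ π/N := by positivity
    linarith
  obtain ⟨hI1l, hI1u⟩ := I1_bounds hx0 hx2
  obtain ⟨hI2l, hI2u⟩ := I2_bounds hy1 hy2
  have hgap : π/2 - y = π/N := by rw [hyval]; ring
  rw [hgap] at hI2u
  have hNx : N * x = 2*π := by rw [hxdef]; field_simp
  have h2x : 2 * x = 4*π/N := by rw [hxdef]; ring
  have h4x : (4/π) * x = 8/N := by rw [hxdef]; field_simp; ring
  have hvol : volB n = N * ((∫ θ in (0:ℝ)..x, -Real.log (2*Real.sin θ))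
      + 2 * ∫ θ in (0:ℝ)..y, -Real.log (2*Real.sin θ)) := rfl
  constructor
  · have h1 : x - x * Real.log (4*π/N) ≤ ∫ θ in (0:ℝ)..x, -Real.log (2*Real.sin θ) := by
      rwa [h2x] at hI1l
    have : N * (x - x * Real.log (4*π/N) + 2 * 0)
        ≤ N * ((∫ θ in (0:ℝ)..x, -Real.log (2*Real.sin θ))
          + 2 * ∫ θ in (0:ℝ)..y, -Real.log (2*Real.sin θ)) := by
      apply mul_le_mul_of_nonneg_left _ hN0.le
      have : (2:ℝ) * 0 ≤ 2 * ∫ θ in (0:ℝ)..y, -Real.log (2*Real.sin θ) := by linarith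
      linarith
    rw [hvol]
    calc 2*π - 2*π*Real.log (4*π/N)
        = N * (x - x * Real.log (4*π/N) + 2 * 0) := by
          rw [mul_add, mul_sub, ← mul_assoc, hNx]; ring
      _ ≤ _ := this
  · have h1 : (∫ θ in (0:ℝ)..x, -Real.log (2*Real.sin θ)) ≤ x - x * Real.log (8/N) := by
      rwa [h4x] at hI1u
    have : N * ((∫ θ in (0:ℝ)..x, -Real.log (2*Real.sin θ))
          + 2 * ∫ θ in (0:ℝ)..y, -Real.log (2*Real.sin θ))
        ≤ N * (x - x * Real.log (8/N) + 2 * (π/N * Real.log 2)) := by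
      apply mul_le_mul_of_nonneg_left _ hN0.le
      linarith
    rw [hvol]
    calc N * ((∫ θ in (0:ℝ)..x, -Real.log (2*Real.sin θ))
          + 2 * ∫ θ in (0:ℝ)..y, -Real.log (2*Real.sin θ))
        ≤ N * (x - x * Real.log (8/N) + 2 * (π/N * Real.log 2)) := this
      _ = 2*π - 2*π*Real.log (8/N) + 2*π*Real.log 2 := by
          rw [mul_add, mul_sub, ← mul_assoc, hNx]
          field_simp

lemma tendsto_aux (c : ℝ) :
    Tendsto (fun n : ℕ => (Real.log n + c)/(Real.log n - Real.log 2)) atTop (nhds 1) := by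
  have h1 : Tendsto (fun n : ℕ => Real.log n - Real.log 2) atTop atTop := by
    apply tendsto_atTop_add_const_right
    exact Real.tendsto_log_atTop.comp tendsto_natCast_atTop_atTop
  have h2 : Tendsto (fun n : ℕ => (c + Real.log 2)/(Real.log n - Real.log 2)) atTop (nhds 0) :=
    Tendsto.div_atTop tendsto_const_nhds h1
  have h3 : Tendsto (fun n : ℕ => 1 + (c + Real.log 2)/(Real.log n - Real.log 2))
      atTop (nhds 1) := by
    have := h2.const_add (1:ℝ)
    simpa using this
  apply h3.congr'
  have hev : ∀ᶠ n : ℕ in atTop, 0 < Real.log n - Real.log 2 := by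
    have := h1.eventually_gt_atTop 0
    exact this
  filter_upwards [hev] with n hn
  field_simp
  ring

theorem bipyramid_volume_asymptotically_sharp :
    Filter.Tendsto (fun n : ℕ => volB n / (2 * π * Real.log ((n : ℝ) / 2)))
      Filter.atTop (nhds 1) := by
  have hpi : (0:ℝ) < π := Real.pi_pos
  have hDpos : ∀ᶠ n : ℕ in atTop, 0 < Real.log ((n:ℝ)/2) := by
    filter_upwards [eventually_ge_atTop 3] with n hn
    have : (3:ℝ) ≤ (n:ℝ) := by exact_mod_cast hn
    apply Real.log_pos
    linarith
  -- lower ratio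
  have hlow : Tendsto (fun n : ℕ => (2*π - 2*π*Real.log (4*π/(n:ℝ))) /
      (2 * π * Real.log ((n:ℝ)/2))) atTop (nhds 1) := by
    apply (tendsto_aux (1 - Real.log (4*π))).congr'
    filter_upwards [eventually_ge_atTop 1] with n hn
    have hn1 : (1:ℝ) ≤ (n:ℝ) := by exact_mod_cast hn
    have hn0 : (0:ℝ) < (n:ℝ) := by linarith
    have e1 : Real.log (4*π/(n:ℝ)) = Real.log (4*π) - Real.log n :=
      Real.log_div (by positivity) hn0.ne'
    have e2 : Real.log ((n:ℝ)/2) = Real.log n - Real.log 2 :=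
      Real.log_div hn0.ne' (by norm_num)
    rw [e1, e2, show 2*π - 2*π*(Real.log (4*π) - Real.log (n:ℝ))
        = 2*π*(Real.log (n:ℝ) + (1 - Real.log (4*π))) by ring,
      mul_div_mul_left _ _ (by positivity : (2:ℝ)*π ≠ 0)]
  have hup : Tendsto (fun n : ℕ => (2*π - 2*π*Real.log (8/(n:ℝ)) + 2*π*Real.log 2) /
      (2 * π * Real.log ((n:ℝ)/2))) atTop (nhds 1) := by
    apply (tendsto_aux (1 - Real.log 8 + Real.log 2)).congr'
    filter_upwards [eventually_ge_atTop 1] with n hn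
    have hn1 : (1:ℝ) ≤ (n:ℝ) := by exact_mod_cast hn
    have hn0 : (0:ℝ) < (n:ℝ) := by linarith
    have e1 : Real.log (8/(n:ℝ)) = Real.log 8 - Real.log n :=
      Real.log_div (by norm_num) hn0.ne'
    have e2 : Real.log ((n:ℝ)/2) = Real.log n - Real.log 2 :=
      Real.log_div hn0.ne' (by norm_num)
    rw [e1, e2, show 2*π - 2*π*(Real.log 8 - Real.log (n:ℝ)) + 2*π*Real.log 2
        = 2*π*(Real.log (n:ℝ) + (1 - Real.log 8 + Real.log 2)) by ring,
      mul_div_mul_left _ _ (by positivity : (2:ℝ)*π ≠ 0)]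
  apply tendsto_of_tendsto_of_tendsto_of_le_of_le' hlow hup
  · filter_upwards [hDpos, eventually_ge_atTop 4] with n hD hn
    obtain ⟨hl, _⟩ := volB_bounds hn
    gcongr
  · filter_upwards [hDpos, eventually_ge_atTop 4] with n hD hn
    obtain ⟨_, hu⟩ := volB_bounds hn
    gcongr
end

section
/- Let (aᵢ)_{i≥1} be positive integers and fix an integer k ≥ 2. Define T̂ by T̂(i) = T(i) for 0 ≤ i ≤ k−1 and T̂(i) = a_{i+1}·T̂(i−1) + T̂(i−2) for i ≥ k. If 2·T(k) > 3·T(k−1) and 2·T(k−1) > 3·T(k−2), then for every integer n ≥ k one has 2·T(n) > 3·T̂(n−1). -/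
/-- The Kauffman–Lopes recurrence computing the determinant of the
2-bridge link `R(a₁, …, aₙ)`:  `T 0 = 1`, `T 1 = a 1`,
`T (k+1) = a (k+1) * T k + T (k-1)`. -/
def Trec (a : ℕ → ℕ) : ℕ → ℕ
  | 0 => 1
  | 1 => a 1
  | (n + 2) => a (n + 2) * Trec a (n + 1) + Trec a n

theorem reduction_factor (a : ℕ → ℕ) (hpos : ∀ i, 1 ≤ a i) (k : ℕ) (hk : 2 ≤ k)
    (That : ℕ → ℕ)
    (hThat_lt : ∀ i < k, That i = Trec a i)
    (hThat_ge : ∀ i, k ≤ i → That i = a (i + 1) * That (i - 1) + That (i - 2))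
    (h1 : 2 * Trec a k > 3 * Trec a (k - 1))
    (h2 : 2 * Trec a (k - 1) > 3 * Trec a (k - 2)) :
    ∀ n, k ≤ n → 2 * Trec a n > 3 * That (n - 1) := by
  have key : ∀ n, k - 1 ≤ n → 2 * Trec a n > 3 * That (n - 1) := by
    intro n
    induction n using Nat.strong_induction_on with
    | _ n ih =>
      intro hn
      by_cases hnk1 : n = k - 1
      · subst hnk1
        have e : k - 1 - 1 = k - 2 := by omega
        rw [e, hThat_lt (k - 2) (by omega)]
        exact h2
      · by_cases hnk : n = k
        · rw [hnk, hThat_lt (k - 1) (by omega)]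
          exact h1
        · obtain ⟨m, rfl⟩ : ∃ m, n = m + 2 := ⟨n - 2, by omega⟩
          have e1 : Trec a (m + 2) = a (m + 2) * Trec a (m + 1) + Trec a m := rfl
          have e2 : That (m + 1) = a (m + 2) * That m + That (m - 1) := by
            have := hThat_ge (m + 1) (by omega)
            simpa using this
          have IH1 : 2 * Trec a (m + 1) > 3 * That m := by
            have := ih (m + 1) (by omega) (by omega)
            simpa using this
          have IH2 : 2 * Trec a m > 3 * That (m - 1) := ih m (by omega) (by omega)
          have ha := hpos (m + 2)
          have : m + 2 - 1 = m + 1 := rfl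
          rw [this, e1, e2]
          nlinarith [IH1, IH2, ha]
  intro n hn
  exact key n (by omega)
end

section
/- Let (aᵢ)_{i≥1} be positive integers, and suppose k ≥ 4 and m ≥ 1 are integers with aᵢ = 1 for all k−2 ≤ i ≤ k+m−1. Define the deleted sequence bᵢ = aᵢ for 1 ≤ i ≤ k−1 and bᵢ = a_{i+m} for i ≥ k, and let S be the recurrence T built from (bᵢ). Then for every integer n ≥ k+m−1 one has 2^m·T(n) > 3^m·S(n−m). -/
lemma Trec_ss (a : ℕ → ℕ) (n : ℕ) :
    Trec a (n + 2) = a (n + 2) * Trec a (n + 1) + Trec a n := rfl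

lemma Trec_rec (a : ℕ → ℕ) {x y z : ℕ} (h1 : y + 1 = x) (h2 : z + 2 = x) :
    Trec a x = a x * Trec a y + Trec a z := by
  subst h2
  have h : y = z + 1 := by omega
  subst h
  rfl

lemma Trec_pos (a : ℕ → ℕ) (hpos : ∀ i, 1 ≤ a i) : ∀ n, 1 ≤ Trec a n := by
  intro n
  induction n using Nat.twoStepInduction with
  | zero => simp [Trec]
  | one => simpa [Trec] using hpos 1
  | more n ih1 ih2 =>
    rw [Trec_ss]
    exact le_trans ih1 (Nat.le_add_left _ _)

lemma Trec_mono (a : ℕ → ℕ) (hpos : ∀ i, 1 ≤ a i) : ∀ n, Trec a n ≤ Trec a (n + 1) := by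
  intro n
  cases n with
  | zero => simpa [Trec] using hpos 1
  | succ n =>
    rw [Trec_ss]
    have h1 : Trec a (n + 1) ≤ a (n + 2) * Trec a (n + 1) :=
      Nat.le_mul_of_pos_left _ (hpos (n + 2))
    omega

lemma Trec_strict (a : ℕ → ℕ) (hpos : ∀ i, 1 ≤ a i) (n : ℕ) :
    Trec a (n + 1) + 1 ≤ Trec a (n + 2) := by
  rw [Trec_ss]
  have h1 : Trec a (n + 1) ≤ a (n + 2) * Trec a (n + 1) :=
    Nat.le_mul_of_pos_left _ (hpos (n + 2))
  have h2 : 1 ≤ Trec a n := Trec_pos a hpos n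
  omega

theorem reduction_delete_ones (a : ℕ → ℕ) (hpos : ∀ i, 1 ≤ a i)
    (k m : ℕ) (hk : 4 ≤ k) (hm : 1 ≤ m)
    (hones : ∀ i, k - 2 ≤ i → i ≤ k + m - 1 → a i = 1)
    (b : ℕ → ℕ) (hb_lt : ∀ i ≤ k - 1, b i = a i) (hb_ge : ∀ i, k ≤ i → b i = a (i + m)) :
    ∀ n, k + m - 1 ≤ n → 2 ^ m * Trec a n > 3 ^ m * Trec b (n - m) := by
  obtain ⟨k', rfl⟩ : ∃ k', k = k' + 4 := ⟨k - 4, by omega⟩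
  obtain ⟨m', rfl⟩ : ∃ m', m = m' + 1 := ⟨m - 1, by omega⟩
  set M := m' + 1 with hM
  -- agreement of b and a up to k-1
  have hAgree : ∀ j, j ≤ k' + 3 → Trec b j = Trec a j := by
    intro j
    induction j using Nat.twoStepInduction with
    | zero => intro _; rfl
    | one => intro _; show b 1 = a 1; exact hb_lt 1 (by omega)
    | more j ih1 ih2 =>
      intro hj
      rw [Trec_ss, Trec_ss, ih1 (by omega), ih2 (by omega), hb_lt (j + 2) (by omega)]
  -- weak ratio step
  have hB : ∀ i, k' + 2 ≤ i → i + 1 ≤ k' + M + 3 → 3 * Trec a i ≤ 2 * Trec a (i + 1) := by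
    intro i h1 h2
    obtain ⟨t, rfl⟩ : ∃ t, i = t + 2 := ⟨i - 2, by omega⟩
    have ha1 : a (t + 3) = 1 := hones (t + 3) (by omega) (by omega)
    have ha2 : a (t + 2) = 1 := hones (t + 2) (by omega) (by omega)
    have e1 : Trec a (t + 3) = a (t + 3) * Trec a (t + 2) + Trec a (t + 1) :=
      Trec_rec a (by omega) (by omega)
    have e2 : Trec a (t + 2) = a (t + 2) * Trec a (t + 1) + Trec a t :=
      Trec_rec a (by omega) (by omega)
    rw [ha1, one_mul] at e1
    rw [ha2, one_mul] at e2
    have hmono : Trec a t ≤ Trec a (t + 1) := Trec_mono a hpos t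
    show 3 * Trec a (t + 2) ≤ 2 * Trec a (t + 3)
    omega
  -- strict ratio step
  have hB' : ∀ i, k' + 3 ≤ i → i + 1 ≤ k' + M + 3 → 3 * Trec a i < 2 * Trec a (i + 1) := by
    intro i h1 h2
    obtain ⟨t, rfl⟩ : ∃ t, i = t + 3 := ⟨i - 3, by omega⟩
    have ha1 : a (t + 4) = 1 := hones (t + 4) (by omega) (by omega)
    have ha2 : a (t + 3) = 1 := hones (t + 3) (by omega) (by omega)
    have e1 : Trec a (t + 4) = a (t + 4) * Trec a (t + 3) + Trec a (t + 2) :=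
      Trec_rec a (by omega) (by omega)
    have e2 : Trec a (t + 3) = a (t + 3) * Trec a (t + 2) + Trec a (t + 1) :=
      Trec_rec a (by omega) (by omega)
    rw [ha1, one_mul] at e1
    rw [ha2, one_mul] at e2
    have hstr : Trec a (t + 1) + 1 ≤ Trec a (t + 2) := Trec_strict a hpos t
    show 3 * Trec a (t + 3) < 2 * Trec a (t + 4)
    omega
  -- chained strict inequality from k-1
  have hC1 : ∀ j, 1 ≤ j → j ≤ M → 3 ^ j * Trec a (k' + 3) < 2 ^ j * Trec a (k' + 3 + j) := by
    intro j hj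
    induction j, hj using Nat.le_induction with
    | base =>
      intro _
      simpa [pow_one] using hB' (k' + 3) (le_refl _) (by omega)
    | succ j hj ih =>
      intro h2
      have ihj := ih (by omega)
      have hstep := hB' (k' + 3 + j) (by omega) (by omega)
      calc 3 ^ (j + 1) * Trec a (k' + 3) = 3 * (3 ^ j * Trec a (k' + 3)) := by ring
        _ < 3 * (2 ^ j * Trec a (k' + 3 + j)) :=
            mul_lt_mul_of_pos_left ihj (by norm_num)
        _ = 2 ^ j * (3 * Trec a (k' + 3 + j)) := by ring
        _ ≤ 2 ^ j * (2 * Trec a (k' + 3 + j + 1)) :=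
            Nat.mul_le_mul_left _ (le_of_lt hstep)
        _ = 2 ^ (j + 1) * Trec a (k' + 3 + j + 1) := by ring
        _ = 2 ^ (j + 1) * Trec a (k' + 3 + (j + 1)) := rfl
  -- chained weak inequality from k-2
  have hC2 : ∀ j, j ≤ M → 3 ^ j * Trec a (k' + 2) ≤ 2 ^ j * Trec a (k' + 2 + j) := by
    intro j
    induction j with
    | zero => intro _; simp
    | succ j ih =>
      intro h2
      have ihj := ih (by omega)
      have hstep := hB (k' + 2 + j) (by omega) (by omega)
      calc 3 ^ (j + 1) * Trec a (k' + 2) = 3 * (3 ^ j * Trec a (k' + 2)) := by ring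
        _ ≤ 3 * (2 ^ j * Trec a (k' + 2 + j)) := Nat.mul_le_mul_left _ ihj
        _ = 2 ^ j * (3 * Trec a (k' + 2 + j)) := by ring
        _ ≤ 2 ^ j * (2 * Trec a (k' + 2 + j + 1)) := Nat.mul_le_mul_left _ hstep
        _ = 2 ^ (j + 1) * Trec a (k' + 2 + (j + 1)) := by ring
  -- combination lemma
  have combine : ∀ A X Y x y : ℕ, 1 ≤ A →
      3 ^ M * x < 2 ^ M * X → 3 ^ M * y ≤ 2 ^ M * Y →
      3 ^ M * (A * x + y) < 2 ^ M * (A * X + Y) := by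
    intro A X Y x y hA h1 h2
    have h1' : A * (3 ^ M * x) + A ≤ A * (2 ^ M * X) := by
      calc A * (3 ^ M * x) + A = A * (3 ^ M * x + 1) := by ring
        _ ≤ A * (2 ^ M * X) := Nat.mul_le_mul_left _ h1
    calc 3 ^ M * (A * x + y) = A * (3 ^ M * x) + 3 ^ M * y := by ring
      _ < A * (2 ^ M * X) + 2 ^ M * Y := by linarith
      _ = 2 ^ M * (A * X + Y) := by ring
  -- base cases
  have base0 : 2 ^ M * Trec a (k' + 4 + m') > 3 ^ M * Trec b (k' + 3) := by
    rw [hAgree (k' + 3) (le_refl _)]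
    have h := hC1 M (by omega) (le_refl _)
    rwa [show k' + 3 + M = k' + 4 + m' from by omega] at h
  have base1 : 2 ^ M * Trec a (k' + 4 + m' + 1) > 3 ^ M * Trec b (k' + 3 + 1) := by
    have ea : Trec a (k' + 4 + m' + 1) =
        a (k' + 4 + m' + 1) * Trec a (k' + 4 + m') + Trec a (k' + 3 + m') :=
      Trec_rec a (by omega) (by omega)
    have eb : Trec b (k' + 3 + 1) =
        b (k' + 3 + 1) * Trec b (k' + 3) + Trec b (k' + 2) :=
      Trec_rec b (by omega) (by omega)
    rw [hb_ge (k' + 3 + 1) (by omega), hAgree (k' + 3) (by omega),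
      hAgree (k' + 2) (by omega), show k' + 3 + 1 + M = k' + 4 + m' + 1 from by omega] at eb
    rw [ea, eb]
    have h1 : 3 ^ M * Trec a (k' + 3) < 2 ^ M * Trec a (k' + 4 + m') := by
      have h := hC1 M (by omega) (le_refl _)
      rwa [show k' + 3 + M = k' + 4 + m' from by omega] at h
    have h2 : 3 ^ M * Trec a (k' + 2) ≤ 2 ^ M * Trec a (k' + 3 + m') := by
      have h := hC2 M (le_refl _)
      rwa [show k' + 2 + M = k' + 3 + m' from by omega] at h
    exact combine _ _ _ _ _ (hpos _) h1 h2
  -- main two-step induction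
  have main : ∀ d, 2 ^ M * Trec a (k' + 4 + m' + d) > 3 ^ M * Trec b (k' + 3 + d) ∧
      2 ^ M * Trec a (k' + 4 + m' + (d + 1)) > 3 ^ M * Trec b (k' + 3 + (d + 1)) := by
    intro d
    induction d with
    | zero => exact ⟨base0, base1⟩
    | succ d ih =>
      refine ⟨ih.2, ?_⟩
      have ea : Trec a (k' + 4 + m' + (d + 2)) =
          a (k' + 4 + m' + (d + 2)) * Trec a (k' + 4 + m' + (d + 1)) +
            Trec a (k' + 4 + m' + d) :=
        Trec_rec a (by omega) (by omega)
      have eb : Trec b (k' + 3 + (d + 2)) =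
          b (k' + 3 + (d + 2)) * Trec b (k' + 3 + (d + 1)) + Trec b (k' + 3 + d) :=
        Trec_rec b (by omega) (by omega)
      rw [hb_ge (k' + 3 + (d + 2)) (by omega),
        show k' + 3 + (d + 2) + M = k' + 4 + m' + (d + 2) from by omega] at eb
      rw [ea, eb]
      exact combine _ _ _ _ _ (hpos _) ih.2 (le_of_lt ih.1)
  intro n hn
  obtain ⟨d, rfl⟩ : ∃ d, n = k' + 4 + m' + d := ⟨n - (k' + 4 + m'), by omega⟩
  rw [show k' + 4 + m' + d - M = k' + 3 + d from by omega]
  exact (main d).1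
end

section
/- For every integer n ≥ 3, the number of spanning trees of the wheel graph Wₙ equals −2 + ((3+√5)/2)ⁿ + ((3−√5)/2)ⁿ. -/
/-- The wheel graph on `n + 1` vertices: vertex `0` is the hub, adjacent to all the
vertices `1, …, n`, which form an `n`-cycle. -/
def wheelGraph (n : ℕ) : SimpleGraph (Fin (n + 1)) :=
  SimpleGraph.fromRel (fun i j =>
    (i : ℕ) = 0 ∨ ((i : ℕ) + 1 = (j : ℕ)) ∨ ((i : ℕ) = n ∧ (j : ℕ) = 1))

/-- The number of spanning trees of a simple graph `G`. -/
noncomputable def spanningTreeCount {V : Type*} (G : SimpleGraph V) : ℕ :=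
  Nat.card {H : G.Subgraph // H.IsSpanning ∧ H.coe.IsTree}


namespace WheelAux
open Finset

/-- transfer weight -/
def w (a b : Fin 3) : ℕ := if a = 1 ∧ b = 0 then 0 else 1

/-- number of `ok`-walks of length `k` from `x` to `y` -/
def U : ℕ → Fin 3 → Fin 3 → ℕ
  | 0, x, y => if x = y then 1 else 0
  | (k+1), x, y => ∑ z : Fin 3, U k x z * w z y

lemma aux_castSucc_add_one {k : ℕ} (i : Fin (k+1)) (h : i ≠ Fin.last k) :
    (i+1).castSucc = i.succ := by
  have : (i : ℕ) < k := by
    have := i.isLt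
    rcases Nat.lt_or_ge (i : ℕ) k with h' | h'
    · exact h'
    · exact absurd (Fin.ext (by omega : (i : ℕ) = k)) h
  ext
  simp [Fin.add_def, Fin.val_succ]
  omega

lemma aux_last_add_one {k : ℕ} : (Fin.last k + 1 : Fin (k+1)) = 0 := by
  ext; simp [Fin.add_def]

/-- linear sequences -/
def lin (k : ℕ) (x y : Fin 3) : Finset (Fin (k+1) → Fin 3) :=
  univ.filter (fun f => f 0 = x ∧ f (Fin.last k) = y ∧
    ∀ i : Fin k, ¬(f i.castSucc = 1 ∧ f i.succ = 0))

lemma snoc_zero' {k : ℕ} (g : Fin (k+1) → Fin 3) (y : Fin 3) :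
    (Fin.snoc g y : Fin (k+2) → Fin 3) 0 = g 0 := by
  rw [← Fin.castSucc_zero, Fin.snoc_castSucc]

lemma lin_card (k : ℕ) (x y : Fin 3) : (lin k x y).card = U k x y := by
  induction k generalizing y with
  | zero => fin_cases x <;> fin_cases y <;> decide
  | succ k ih =>
    have h1 : (lin (k+1) x y).card =
        ∑ z : Fin 3, ((lin (k+1) x y).filter (fun f => f (Fin.castSucc (Fin.last k)) = z)).card :=
      card_eq_sum_card_fiberwise (fun f _ => mem_univ _)
    rw [h1]
    show _ = U (k+1) x y
    rw [U]
    refine Finset.sum_congr rfl (fun z _ => ?_)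
    by_cases hok : z = 1 ∧ y = 0
    · rw [w, if_pos hok]
      rw [mul_zero]
      rw [Finset.card_eq_zero, Finset.eq_empty_iff_forall_notMem]
      intro f hf
      simp only [lin, mem_filter, mem_univ, true_and] at hf
      obtain ⟨⟨h0, hlast, hstep⟩, hz⟩ := hf
      exact hstep (Fin.last k) ⟨by rw [hz, hok.1], by rw [Fin.succ_last, hlast, hok.2]⟩
    · rw [w, if_neg hok, mul_one, ← ih z]
      apply Finset.card_bij' (fun f _ => f ∘ Fin.castSucc) (fun g _ => Fin.snoc g y)
      · -- forward membership
        intro f hf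
        simp only [lin, mem_filter, mem_univ, true_and] at hf ⊢
        obtain ⟨⟨h0, hlast, hstep⟩, hz⟩ := hf
        refine ⟨h0, hz, fun i => ?_⟩
        have := hstep i.castSucc
        simp only [Function.comp_apply]
        rw [← Fin.succ_castSucc]
        exact this
      · -- backward membership
        intro g hg
        simp only [lin, mem_filter, mem_univ, true_and] at hg ⊢
        obtain ⟨h0, hlast, hstep⟩ := hg
        refine ⟨⟨?_, ?_, ?_⟩, ?_⟩
        · rw [snoc_zero']; exact h0
        · simp [Fin.snoc_last]
        · intro i
          refine Fin.lastCases ?_ (fun j => ?_) i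
          · rw [Fin.succ_last]
            simp only [Fin.snoc_castSucc, Fin.snoc_last]
            rw [hlast]
            tauto
          · rw [Fin.succ_castSucc]
            simp only [Fin.snoc_castSucc]
            exact hstep j
        · rw [Fin.snoc_castSucc]; exact hlast
      · -- left inverse
        intro f hf
        simp only [lin, mem_filter, mem_univ, true_and] at hf
        funext i
        refine Fin.lastCases ?_ (fun j => ?_) i
        · rw [Fin.snoc_last, hf.1.2.1]
        · rw [Fin.snoc_castSucc]; rfl
      · -- right inverse
        intro g hg
        funext j
        simp only [Function.comp_apply, Fin.snoc_castSucc]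

/-- circular sequences -/
def circ (n : ℕ) [NeZero n] : Finset (Fin n → Fin 3) :=
  univ.filter (fun g => ∀ i : Fin n, ¬(g i = 1 ∧ g (i+1) = 0))

lemma circ_card (k : ℕ) : (circ (k+1)).card = ∑ x : Fin 3, U (k+1) x x := by
  have h1 : (circ (k+1)).card =
      ∑ x : Fin 3, ((circ (k+1)).filter (fun g => g 0 = x)).card :=
    card_eq_sum_card_fiberwise (fun f _ => mem_univ _)
  rw [h1]
  refine Finset.sum_congr rfl (fun x _ => ?_)
  rw [← lin_card (k+1) x x]
  apply Finset.card_bij' (fun g _ => Fin.snoc g x) (fun f _ => f ∘ Fin.castSucc)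
  · intro g hg
    simp only [circ, lin, mem_filter, mem_univ, true_and] at hg ⊢
    obtain ⟨hstep, h0⟩ := hg
    refine ⟨by rw [snoc_zero']; exact h0, by simp [Fin.snoc_last], fun i => ?_⟩
    rw [Fin.snoc_castSucc]
    by_cases hi : i = Fin.last k
    · subst hi
      rw [Fin.succ_last, Fin.snoc_last]
      intro hcon
      apply hstep (Fin.last k)
      rw [aux_last_add_one, h0]
      exact hcon
    · rw [← aux_castSucc_add_one i hi, Fin.snoc_castSucc]
      exact hstep i
  · intro f hf
    simp only [circ, lin, mem_filter, mem_univ, true_and] at hf ⊢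
    obtain ⟨h0, hlast, hstep⟩ := hf
    refine ⟨fun i => ?_, by simpa using h0⟩
    simp only [Function.comp_apply]
    by_cases hi : i = Fin.last k
    · subst hi
      rw [aux_last_add_one]
      intro hcon
      apply hstep (Fin.last k)
      refine ⟨hcon.1, ?_⟩
      rw [Fin.succ_last, hlast, ← h0]
      simpa using hcon.2
    · intro hcon
      exact hstep i ⟨hcon.1, by rw [← aux_castSucc_add_one i hi]; exact hcon.2⟩
  · intro g hg
    funext j
    simp only [Function.comp_apply, Fin.snoc_castSucc]
  · intro f hf
    simp only [lin, mem_filter, mem_univ, true_and] at hf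
    funext i
    refine Fin.lastCases ?_ (fun j => ?_) i
    · rw [Fin.snoc_last, hf.2.1]
    · rw [Fin.snoc_castSucc]; rfl


def t (k : ℕ) : ℕ := ∑ x : Fin 3, U k x x

lemma U_rec : ∀ (k : ℕ) (x y : Fin 3), U (k+3) x y + U (k+1) x y = 3 * U (k+2) x y := by
  intro k
  induction k with
  | zero => decide
  | succ k ih =>
    intro x y
    show (∑ z : Fin 3, U (k+3) x z * w z y) + (∑ z : Fin 3, U (k+1) x z * w z y)
        = 3 * ∑ z : Fin 3, U (k+2) x z * w z y
    rw [← Finset.sum_add_distrib, Finset.mul_sum]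
    refine Finset.sum_congr rfl (fun z _ => ?_)
    rw [← add_mul, ih x z]
    ring

lemma t_rec (k : ℕ) : t (k+3) + t (k+1) = 3 * t (k+2) := by
  unfold t
  rw [← Finset.sum_add_distrib, Finset.mul_sum]
  exact Finset.sum_congr rfl (fun x _ => U_rec k x x)

lemma t1 : t 1 = 3 := by decide
lemma t2 : t 2 = 7 := by decide

lemma t_real : ∀ k : ℕ, (t (k+1) : ℝ) =
    ((3 + Real.sqrt 5)/2)^(k+1) + ((3 - Real.sqrt 5)/2)^(k+1) := by
  have hs : Real.sqrt 5 ^ 2 = 5 := Real.sq_sqrt (by norm_num)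
  have H : ∀ k : ℕ, ((t (k+1) : ℝ) =
      ((3 + Real.sqrt 5)/2)^(k+1) + ((3 - Real.sqrt 5)/2)^(k+1)) ∧
      ((t (k+2) : ℝ) = ((3 + Real.sqrt 5)/2)^(k+2) + ((3 - Real.sqrt 5)/2)^(k+2)) := by
    intro k
    induction k with
    | zero =>
      constructor
      · rw [t1]; push_cast; ring
      · rw [t2]; push_cast
        have : ((7 : ℕ) : ℝ) = 7 := by norm_num
        linear_combination -hs / 2
    | succ k ih =>
      refine ⟨ih.2, ?_⟩
      have hrec : (t (k+3) : ℝ) + (t (k+1) : ℝ) = 3 * (t (k+2) : ℝ) := by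
        exact_mod_cast congrArg (fun m : ℕ => (m : ℝ)) (t_rec k)
      have hA : ((3 + Real.sqrt 5)/2)^(k+3) =
          3*((3 + Real.sqrt 5)/2)^(k+2) - ((3 + Real.sqrt 5)/2)^(k+1) := by
        have h2 : ((3 + Real.sqrt 5)/2)^2 = 3*((3 + Real.sqrt 5)/2) - 1 := by
          linear_combination hs / 4
        calc ((3 + Real.sqrt 5)/2)^(k+3)
            = ((3 + Real.sqrt 5)/2)^(k+1) * ((3 + Real.sqrt 5)/2)^2 := by ring
          _ = ((3 + Real.sqrt 5)/2)^(k+1) * (3*((3 + Real.sqrt 5)/2) - 1) := by rw [h2]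
          _ = 3*((3 + Real.sqrt 5)/2)^(k+2) - ((3 + Real.sqrt 5)/2)^(k+1) := by ring
      have hB : ((3 - Real.sqrt 5)/2)^(k+3) =
          3*((3 - Real.sqrt 5)/2)^(k+2) - ((3 - Real.sqrt 5)/2)^(k+1) := by
        have h2 : ((3 - Real.sqrt 5)/2)^2 = 3*((3 - Real.sqrt 5)/2) - 1 := by
          linear_combination hs / 4
        calc ((3 - Real.sqrt 5)/2)^(k+3)
            = ((3 - Real.sqrt 5)/2)^(k+1) * ((3 - Real.sqrt 5)/2)^2 := by ring
          _ = ((3 - Real.sqrt 5)/2)^(k+1) * (3*((3 - Real.sqrt 5)/2) - 1) := by rw [h2]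
          _ = 3*((3 - Real.sqrt 5)/2)^(k+2) - ((3 - Real.sqrt 5)/2)^(k+1) := by ring
      have := ih.1
      have := ih.2
      rw [show k+1+2 = k+3 by ring, hA, hB]
      linarith
  exact fun k => (H k).1

/-- main counting result for circular sequences -/
lemma circ_card_real (n : ℕ) [NeZero n] (hn : 1 ≤ n) : ((circ n).card : ℝ) =
    ((3 + Real.sqrt 5)/2)^n + ((3 - Real.sqrt 5)/2)^n := by
  obtain ⟨k, rfl⟩ : ∃ k, n = k + 1 := ⟨n - 1, by omega⟩
  have h := circ_card k
  have : ((circ (k+1) : Finset _).card : ℝ) = (t (k+1) : ℝ) := by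
    rw [h]; rfl
  rw [this, t_real k]

end WheelAux

namespace WheelAux
open SimpleGraph

section Parent
variable {V : Type*} [DecidableEq V] (r : V) (f : V → V)

/-- the graph whose edges join `x` and `f x` -/
def pG : SimpleGraph V where
  Adj a b := a ≠ b ∧ (f a = b ∨ f b = a)
  symm := ⟨by rintro a b ⟨h1, h2⟩; exact ⟨h1.symm, h2.symm⟩⟩
  loopless := ⟨fun a h => h.1 rfl⟩

lemma pG_adj {a b : V} : (pG f).Adj a b ↔ a ≠ b ∧ (f a = b ∨ f b = a) := Iff.rfl

/-- height of a vertex: number of steps to reach the root -/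
noncomputable def hgt (hreach : ∀ x, ∃ k, f^[k] x = r) (x : V) : ℕ :=
  Nat.find (hreach x)

variable (hreach : ∀ x, ∃ k, f^[k] x = r)

lemma hgt_spec (x : V) : f^[hgt r f hreach x] x = r := Nat.find_spec (hreach x)

lemma hgt_le {x : V} {k : ℕ} (h : f^[k] x = r) : hgt r f hreach x ≤ k :=
  Nat.find_min' (hreach x) h

lemma hgt_eq_zero {x : V} : hgt r f hreach x = 0 ↔ x = r := by
  constructor
  · intro h
    have := hgt_spec r f hreach x
    rwa [h, Function.iterate_zero_apply] at this
  · rintro rfl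
    exact Nat.le_zero.1 (hgt_le _ f hreach (by simp))

lemma hgt_f {x : V} (hx : x ≠ r) : hgt r f hreach (f x) + 1 = hgt r f hreach x := by
  have h0 : hgt r f hreach x ≠ 0 := fun h => hx ((hgt_eq_zero r f hreach).1 h)
  obtain ⟨m, hm⟩ : ∃ m, hgt r f hreach x = m + 1 :=
    ⟨_, (Nat.succ_pred_eq_of_pos (Nat.pos_of_ne_zero h0)).symm⟩
  have h1 : f^[m] (f x) = r := by
    have := hgt_spec r f hreach x
    rwa [hm, Function.iterate_succ_apply] at this
  have h2 : hgt r f hreach (f x) ≤ m := hgt_le r f hreach h1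
  have h3 : hgt r f hreach x ≤ hgt r f hreach (f x) + 1 := by
    apply hgt_le
    rw [Function.iterate_succ_apply]
    exact hgt_spec r f hreach (f x)
  omega

lemma exists_canon (hne : ∀ x, x ≠ r → f x ≠ x) :
    ∀ (k : ℕ) (x : V), hgt r f hreach x ≤ k → x ≠ r →
    ∃ p : (pG f).Walk x r, p.IsPath ∧ p.support.tail.head? = some (f x) ∧
      ∀ y ∈ p.support, hgt r f hreach y ≤ hgt r f hreach x := by
  intro k
  induction k with
  | zero =>
    intro x hk hx
    exact absurd ((hgt_eq_zero r f hreach).1 (Nat.le_zero.1 hk)) hx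
  | succ k ih =>
    intro x hk hx
    have hAdj : (pG f).Adj x (f x) := ⟨(hne x hx).symm, Or.inl rfl⟩
    have hgtf : hgt r f hreach (f x) + 1 = hgt r f hreach x := hgt_f r f hreach hx
    by_cases hfx : f x = r
    · refine ⟨Walk.cons hAdj ((Walk.nil : (pG f).Walk r r).copy hfx.symm rfl), ?_, ?_, ?_⟩
      · rw [Walk.cons_isPath_iff]
        refine ⟨by simp, ?_⟩
        rw [Walk.support_copy]
        simp only [Walk.support_nil, List.mem_singleton]
        intro h; exact hx h
      · rw [Walk.support_cons, List.tail_cons, Walk.support_copy]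
        simp [hfx]
      · intro y hy
        rw [Walk.support_cons, Walk.support_copy] at hy
        simp only [Walk.support_nil, List.mem_cons, List.not_mem_nil, or_false] at hy
        rcases hy with rfl | hyr
        · exact le_refl _
        · rw [hyr, (hgt_eq_zero r f hreach).2 rfl]; omega
    · obtain ⟨q, hq, hqh, hqb⟩ := ih (f x) (by omega) hfx
      refine ⟨Walk.cons hAdj q, ?_, ?_, ?_⟩
      · rw [Walk.cons_isPath_iff]
        refine ⟨hq, fun hmem => ?_⟩
        have := hqb x hmem
        omega
      · rw [Walk.support_cons, List.tail_cons, Walk.support_eq_cons q]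
        rfl
      · intro y hy
        rw [Walk.support_cons] at hy
        rcases List.mem_cons.1 hy with rfl | hy
        · exact le_refl _
        · have := hqb y hy; omega

lemma pG_reach (hreach : ∀ x, ∃ k, f^[k] x = r) (hne : ∀ x, x ≠ r → f x ≠ x) (x : V) : (pG f).Reachable x r := by
  by_cases hx : x = r
  · subst hx; exact Reachable.refl _
  · obtain ⟨p, -, -, -⟩ := exists_canon r f hreach hne (hgt r f hreach x) x (le_refl _) hx
    exact p.reachable

lemma pG_connected (hreach : ∀ x, ∃ k, f^[k] x = r) (hne : ∀ x, x ≠ r → f x ≠ x) : (pG f).Connected := by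
  have : Nonempty V := ⟨r⟩
  rw [connected_iff]
  refine ⟨fun a b => ?_, this⟩
  exact (pG_reach r f hreach hne a).trans (pG_reach r f hreach hne b).symm

lemma pG_acyclic (hr : f r = r) (hreach : ∀ x, ∃ k, f^[k] x = r) : (pG f).IsAcyclic := by
  intro v c hc
  have hne' : c.support.toFinset.Nonempty := by
    rw [List.toFinset_nonempty_iff]
    exact c.support_ne_nil
  obtain ⟨m, hm, hmax⟩ := Finset.exists_max_image c.support.toFinset (hgt r f hreach) hne'
  rw [List.mem_toFinset] at hm
  have hmax' : ∀ y ∈ c.support, hgt r f hreach y ≤ hgt r f hreach m := by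
    intro y hy; exact hmax y (List.mem_toFinset.2 hy)
  have hc' : (c.rotate m hm).IsCycle := hc.rotate hm
  have hperm := c.rotate_edges m hm
  have key : ∀ y, (pG f).Adj m y → y ∈ c.support → f m = y := by
    intro y hadj hy
    rcases hadj.2 with h | h
    · exact h
    · exfalso
      have hyr : y ≠ r := by
        intro hy2
        apply hadj.1
        rw [hy2] at h ⊢
        rw [← h, hr]
      have h2 := hgt_f r f hreach hyr
      rw [h] at h2
      have := hmax' y hy
      omega
  rcases hceq : c.rotate m hm with _ | @⟨_, b, _, hadj, p⟩
  · rw [hceq] at hc'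
    exact hc'.ne_nil rfl
  · rw [hceq] at hc' hperm
    have hmemb : s(m, b) ∈ c.edges := by
      rw [← hperm.mem_iff]
      exact List.mem_cons_self
    have hbsup : b ∈ c.support := c.snd_mem_support_of_mem_edges hmemb
    have hb : f m = b := key b hadj hbsup
    have hpnil : ¬p.Nil := Walk.not_nil_of_ne (fun h => hadj.ne h.symm)
    obtain ⟨d, hadj2, q, hq⟩ := Walk.not_nil_iff.1 (by
      rw [Walk.nil_iff_length_eq, Walk.length_reverse, ← Walk.nil_iff_length_eq]
      exact hpnil : ¬p.reverse.Nil)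
    have hmd : s(m, d) ∈ p.edges := by
      have : s(m, d) ∈ p.reverse.edges := by
        rw [hq]; exact List.mem_cons_self
      rwa [Walk.edges_reverse, List.mem_reverse] at this
    have hdsup : d ∈ c.support := by
      apply c.snd_mem_support_of_mem_edges
      rw [← hperm.mem_iff, Walk.edges_cons]
      exact List.mem_cons_of_mem _ hmd
    have hd : f m = d := key d hadj2 hdsup
    have hnodup : (Walk.cons hadj p).edges.Nodup := hc'.edges_nodup
    rw [Walk.edges_cons, List.nodup_cons] at hnodup
    apply hnodup.1
    have : s(m, b) = s(m, d) := by rw [← hb, ← hd]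
    rw [this]
    exact hmd

lemma pG_isTree (hr : f r = r) (hreach : ∀ x, ∃ k, f^[k] x = r)
    (hne : ∀ x, x ≠ r → f x ≠ x) : (pG f).IsTree :=
  ⟨pG_connected r f hreach hne, pG_acyclic r f hr hreach⟩

lemma sec_unique (hr : f r = r) (hreach : ∀ x, ∃ k, f^[k] x = r)
    (hne : ∀ x, x ≠ r → f x ≠ x) {x : V} (hx : x ≠ r)
    (p : (pG f).Walk x r) (hp : p.IsPath) :
    p.support.tail.head? = some (f x) := by
  obtain ⟨q, hq, hqh, -⟩ := exists_canon r f hreach hne _ x le_rfl hx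
  have : (⟨p, hp⟩ : (pG f).Path x r) = ⟨q, hq⟩ :=
    (pG_acyclic r f hr hreach).path_unique _ _
  rw [Subtype.mk.injEq] at this
  rw [this]
  exact hqh

lemma sec_unique' (T : SimpleGraph V) (g : V → V) (hT : T = pG g) (hr : g r = r)
    (hreach : ∀ x, ∃ k, g^[k] x = r) (hne : ∀ x, x ≠ r → g x ≠ x) {x : V} (hx : x ≠ r)
    (p : T.Walk x r) (hp : p.IsPath) :
    p.support.tail.head? = some (g x) := by
  subst hT
  exact sec_unique r g hr hreach hne hx p hp

lemma parent_unique (f₁ f₂ : V → V) (hr₁ : f₁ r = r) (hr₂ : f₂ r = r)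
    (hreach₁ : ∀ x, ∃ k, f₁^[k] x = r) (hreach₂ : ∀ x, ∃ k, f₂^[k] x = r)
    (hne₁ : ∀ x, x ≠ r → f₁ x ≠ x) (hne₂ : ∀ x, x ≠ r → f₂ x ≠ x)
    (hG : pG f₁ = pG f₂) : f₁ = f₂ := by
  funext x
  by_cases hx : x = r
  · subst hx; rw [hr₁, hr₂]
  · obtain ⟨p, hp, -, -⟩ := exists_canon r f₁ hreach₁ hne₁ _ x le_rfl hx
    have h1 := sec_unique' r (pG f₁) f₁ rfl hr₁ hreach₁ hne₁ hx p hp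
    have h2 := sec_unique' r (pG f₁) f₂ hG hr₂ hreach₂ hne₂ hx p hp
    rw [h1] at h2
    exact Option.some.inj h2

end Parent
end WheelAux

namespace WheelAux
open SimpleGraph

section Wheel
variable {n : ℕ} [NeZero n]

/-- rim vertex -/
def vtx (i : Fin n) : Fin (n+1) := i.succ

lemma vtx_ne_zero (i : Fin n) : vtx i ≠ 0 := Fin.succ_ne_zero i

lemma vtx_inj {i j : Fin n} (h : vtx i = vtx j) : i = j := by
  have := congrArg Fin.val h
  simp only [vtx, Fin.val_succ] at this
  exact Fin.ext (by omega)

lemma fin_one_ne_zero (hn : 3 ≤ n) : (1 : Fin n) ≠ 0 := by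
  intro h
  have := congrArg Fin.val h
  rw [Fin.val_one'] at this
  simp at this
  omega

lemma fin_add_one_ne (hn : 3 ≤ n) (i : Fin n) : i + 1 ≠ i := by
  intro h
  have h2 := congrArg (fun x => x - i) h
  simp only [add_sub_cancel_left, sub_self] at h2
  exact fin_one_ne_zero hn h2

lemma fin_sub_one_ne (hn : 3 ≤ n) (i : Fin n) : i - 1 ≠ i := by
  intro h
  have h2 : i - 1 + 1 = i + 1 := by rw [h]
  rw [sub_add_cancel] at h2
  exact fin_add_one_ne hn i h2.symm

lemma fin_two_ne (hn : 3 ≤ n) (i : Fin n) : i + 1 ≠ i - 1 := by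
  intro h
  have h2 : i + 1 + 1 = i - 1 + 1 := by rw [h]
  rw [sub_add_cancel] at h2
  have hv := congrArg Fin.val h2
  simp only [Fin.val_add, Fin.val_one'] at hv
  have h1n : 1 % n = 1 := Nat.one_mod_eq_one.2 (by omega)
  rw [h1n] at hv
  have hi := i.isLt
  rcases Nat.lt_or_ge ((i : ℕ) + 1) n with hc | hc
  · rw [Nat.mod_eq_of_lt hc] at hv
    rcases Nat.lt_or_ge ((i : ℕ) + 2) n with hd | hd
    · rw [Nat.mod_eq_of_lt (by omega)] at hv; omega
    · rw [show (i : ℕ) + 1 + 1 = n by omega, Nat.mod_self] at hv; omega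
  · rw [show (i : ℕ) + 1 = n by omega, Nat.mod_self] at hv
    rw [Nat.mod_eq_of_lt (by omega)] at hv
    omega

/-- the parent function associated to a pointer assignment -/
def fg (g : Fin n → Fin 3) : Fin (n+1) → Fin (n+1) :=
  Fin.cases 0 (fun i => if g i = 2 then 0 else if g i = 1 then vtx (i+1) else vtx (i-1))

@[simp] lemma fg_zero (g : Fin n → Fin 3) : fg g 0 = 0 := rfl

lemma fg_vtx (g : Fin n → Fin 3) (i : Fin n) :
    fg g (vtx i) = if g i = 2 then 0 else if g i = 1 then vtx (i+1) else vtx (i-1) := by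
  simp [fg, vtx]

lemma fg_vtx_two {g : Fin n → Fin 3} {i : Fin n} (h : g i = 2) : fg g (vtx i) = 0 := by
  rw [fg_vtx, if_pos h]

lemma fg_vtx_one {g : Fin n → Fin 3} {i : Fin n} (h : g i = 1) : fg g (vtx i) = vtx (i+1) := by
  rw [fg_vtx, if_neg (by rw [h]; decide), if_pos h]

lemma fg_vtx_zero {g : Fin n → Fin 3} {i : Fin n} (h : g i = 0) : fg g (vtx i) = vtx (i-1) := by
  rw [fg_vtx, if_neg (by rw [h]; decide), if_neg (by rw [h]; decide)]

lemma fin3_cases (a : Fin 3) : a = 0 ∨ a = 1 ∨ a = 2 := by fin_cases a <;> simp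

/-- hub is adjacent to everything -/
lemma wheel_adj_hub (x : Fin (n+1)) (hx : x ≠ 0) : (wheelGraph n).Adj 0 x := by
  rw [wheelGraph, fromRel_adj]
  exact ⟨fun h => hx h.symm, Or.inl (Or.inl rfl)⟩

/-- consecutive rim vertices are adjacent -/
lemma wheel_adj_rim (hn : 3 ≤ n) (i : Fin n) : (wheelGraph n).Adj (vtx i) (vtx (i+1)) := by
  rw [wheelGraph, fromRel_adj]
  constructor
  · intro h
    exact fin_add_one_ne hn i (vtx_inj h.symm)
  · left
    rcases Nat.lt_or_ge ((i : ℕ) + 1) n with h | h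
    · right; left
      simp only [vtx, Fin.val_succ, Fin.val_add, Fin.val_one']
      rw [Nat.one_mod_eq_one.2 (by omega), Nat.mod_eq_of_lt (by omega)]
    · right; right
      have hi : (i : ℕ) < n := i.isLt
      have hin : (i : ℕ) = n - 1 := by omega
      constructor
      · simp only [vtx, Fin.val_succ]; omega
      · simp only [vtx, Fin.val_succ, Fin.val_add, Fin.val_one']
        rw [Nat.one_mod_eq_one.2 (by omega)]
        rw [show (i : ℕ) + 1 = n by omega, Nat.mod_self]

/-- classification of rim adjacency -/
lemma wheel_adj_rim_classify (hn : 3 ≤ n) {i j : Fin n}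
    (h : (wheelGraph n).Adj (vtx i) (vtx j)) : j = i + 1 ∨ i = j + 1 := by
  rw [wheelGraph, fromRel_adj] at h
  obtain ⟨hne', hrel⟩ := h
  have hi : (i : ℕ) < n := i.isLt
  have hj : (j : ℕ) < n := j.isLt
  have key : ∀ a b : Fin n, ((vtx a : Fin (n+1)) : ℕ) = 0 ∨
      ((vtx a : Fin (n+1)) : ℕ) + 1 = ((vtx b : Fin (n+1)) : ℕ) ∨
      (((vtx a : Fin (n+1)) : ℕ) = n ∧ ((vtx b : Fin (n+1)) : ℕ) = 1) → b = a + 1 := by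
    intro a b hab
    rcases hab with h0 | hs | ⟨ha, hb⟩
    · simp [vtx, Fin.val_succ] at h0
    · simp only [vtx, Fin.val_succ] at hs
      have : (b : ℕ) = (a : ℕ) + 1 := by omega
      ext
      rw [Fin.val_add, Fin.val_one', Nat.one_mod_eq_one.2 (by omega),
        Nat.mod_eq_of_lt (by omega)]
      omega
    · simp only [vtx, Fin.val_succ] at ha hb
      have hb0 : (b : ℕ) = 0 := by omega
      have ha0 : (a : ℕ) = n - 1 := by omega
      ext
      rw [Fin.val_add, Fin.val_one', Nat.one_mod_eq_one.2 (by omega), hb0, ha0]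
      rw [show n - 1 + 1 = n by omega, Nat.mod_self]
  rcases hrel with h | h
  · exact Or.inl (key i j h)
  · exact Or.inr (key j i h)

/-- every nonzero vertex is a rim vertex -/
lemma eq_vtx_of_ne_zero (x : Fin (n+1)) (hx : x ≠ 0) : ∃ i : Fin n, x = vtx i :=
  Fin.cases (motive := fun x => x ≠ 0 → ∃ i : Fin n, x = vtx i)
    (fun h => absurd rfl h) (fun i _ => ⟨i, rfl⟩) x hx

end Wheel
end WheelAux
namespace WheelAux
open SimpleGraph
open Fin.NatCast Fin.CommRing

section Wheel2
variable {n : ℕ} [NeZero n]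

/-- no pointer pattern `→ ←` -/
def Ok (g : Fin n → Fin 3) : Prop := ∀ i : Fin n, ¬(g i = 1 ∧ g (i+1) = 0)

def Good (g : Fin n → Fin 3) : Prop := Ok g ∧ g ≠ (fun _ => 1) ∧ g ≠ (fun _ => 0)

lemma hcast_fin (hn : 3 ≤ n) {m : ℕ} (hm : 1 ≤ m) : ((m - 1 : ℕ) : Fin n) + 1 = (m : Fin n) := by
  rw [← Nat.cast_add_one, Nat.sub_add_cancel hm]

lemma chase (hn : 3 ≤ n) {g : Fin n → Fin 3} (hOk : Ok g)
    (hR : g ≠ fun _ => 1) (hL : g ≠ fun _ => 0) :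
    ∀ x : Fin (n+1), ∃ k, (fg g)^[k] x = 0 := by
  intro x
  by_cases hx : x = 0
  · exact ⟨0, by simp [hx]⟩
  obtain ⟨i, rfl⟩ := eq_vtx_of_ne_zero x hx
  classical
  rcases fin3_cases (g i) with hgi | hgi | hgi
  · -- left chase
    have hex : ∃ t : ℕ, g (i - (t : Fin n)) ≠ 0 := by
      obtain ⟨j, hj⟩ := Function.ne_iff.1 hL
      refine ⟨(i - j).val, ?_⟩
      rw [Fin.cast_val_eq_self]
      rwa [show i - (i - j) = j by ring]
    set t₀ := Nat.find hex with ht₀def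
    have ht₀ : g (i - (t₀ : Fin n)) ≠ 0 := Nat.find_spec hex
    have hlt : ∀ s, s < t₀ → g (i - (s : Fin n)) = 0 := by
      intro s hs
      have := Nat.find_min hex hs
      by_contra hq
      exact this hq
    have ht1 : 1 ≤ t₀ := by
      rcases Nat.eq_zero_or_pos t₀ with h0 | h1
      · exfalso; apply ht₀; rw [h0]; simpa using hgi
      · exact h1
    have htop : g (i - (t₀ : Fin n)) = 2 := by
      rcases fin3_cases (g (i - (t₀ : Fin n))) with h | h | h
      · exact absurd h ht₀
      · exfalso
        apply hOk (i - (t₀ : Fin n))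
        refine ⟨h, ?_⟩
        have he : i - (t₀ : Fin n) + 1 = i - ((t₀ - 1 : ℕ) : Fin n) := by
          rw [← hcast_fin hn ht1]; ring
        rw [he]
        exact hlt _ (by omega)
      · exact h
    have hiter : ∀ s, s ≤ t₀ → (fg g)^[s] (vtx i) = vtx (i - (s : Fin n)) := by
      intro s
      induction s with
      | zero => intro _; simp
      | succ s ih =>
        intro hs
        rw [Function.iterate_succ_apply', ih (by omega),
          fg_vtx_zero (hlt s (by omega))]
        congr 1
        push_cast
        ring
    exact ⟨t₀ + 1, by rw [Function.iterate_succ_apply', hiter t₀ le_rfl, fg_vtx_two htop]⟩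
  · -- right chase
    have hex : ∃ t : ℕ, g (i + (t : Fin n)) ≠ 1 := by
      obtain ⟨j, hj⟩ := Function.ne_iff.1 hR
      refine ⟨(j - i).val, ?_⟩
      rw [Fin.cast_val_eq_self]
      rwa [show i + (j - i) = j by ring]
    set t₀ := Nat.find hex with ht₀def
    have ht₀ : g (i + (t₀ : Fin n)) ≠ 1 := Nat.find_spec hex
    have hlt : ∀ s, s < t₀ → g (i + (s : Fin n)) = 1 := by
      intro s hs
      have := Nat.find_min hex hs
      by_contra hq
      exact this hq
    have ht1 : 1 ≤ t₀ := by
      rcases Nat.eq_zero_or_pos t₀ with h0 | h1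
      · exfalso; apply ht₀; rw [h0]; simpa using hgi
      · exact h1
    have htop : g (i + (t₀ : Fin n)) = 2 := by
      rcases fin3_cases (g (i + (t₀ : Fin n))) with h | h | h
      · exfalso
        apply hOk (i + ((t₀ - 1 : ℕ) : Fin n))
        refine ⟨hlt _ (by omega), ?_⟩
        have he : i + ((t₀ - 1 : ℕ) : Fin n) + 1 = i + (t₀ : Fin n) := by
          rw [← hcast_fin hn ht1]; ring
        rw [he]
        exact h
      · exact absurd h ht₀
      · exact h
    have hiter : ∀ s, s ≤ t₀ → (fg g)^[s] (vtx i) = vtx (i + (s : Fin n)) := by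
      intro s
      induction s with
      | zero => intro _; simp
      | succ s ih =>
        intro hs
        rw [Function.iterate_succ_apply', ih (by omega),
          fg_vtx_one (hlt s (by omega))]
        congr 1
        push_cast
        ring
    exact ⟨t₀ + 1, by rw [Function.iterate_succ_apply', hiter t₀ le_rfl, fg_vtx_two htop]⟩
  · exact ⟨1, by rw [Function.iterate_one, fg_vtx_two hgi]⟩

lemma fg_hne (hn : 3 ≤ n) (g : Fin n → Fin 3) :
    ∀ x : Fin (n+1), x ≠ 0 → fg g x ≠ x := by
  intro x hx
  obtain ⟨i, rfl⟩ := eq_vtx_of_ne_zero x hx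
  rcases fin3_cases (g i) with h | h | h
  · rw [fg_vtx_zero h]
    exact fun hc => fin_sub_one_ne hn i (vtx_inj hc)
  · rw [fg_vtx_one h]
    exact fun hc => fin_add_one_ne hn i (vtx_inj hc)
  · rw [fg_vtx_two h]
    exact (vtx_ne_zero i).symm

lemma Tg_isTree (hn : 3 ≤ n) {g : Fin n → Fin 3} (hg : Good g) : (pG (fg g)).IsTree :=
  pG_isTree 0 (fg g) rfl (chase hn hg.1 hg.2.1 hg.2.2) (fg_hne hn g)

lemma adj_of_fg (hn : 3 ≤ n) (g : Fin n → Fin 3) (a b : Fin (n+1)) (hne' : a ≠ b)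
    (h : fg g a = b) : (wheelGraph n).Adj a b := by
  by_cases ha : a = 0
  · exfalso; apply hne'; rw [ha] at h ⊢; rw [← h]; rfl
  obtain ⟨i, rfl⟩ := eq_vtx_of_ne_zero a ha
  rcases fin3_cases (g i) with hgi | hgi | hgi
  · rw [fg_vtx_zero hgi] at h
    rw [← h]
    have := wheel_adj_rim hn (i-1)
    rw [sub_add_cancel] at this
    exact this.symm
  · rw [fg_vtx_one hgi] at h
    rw [← h]
    exact wheel_adj_rim hn i
  · rw [fg_vtx_two hgi] at h
    rw [← h]
    exact (wheel_adj_hub (vtx i) (vtx_ne_zero i)).symm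

lemma Tg_le_wheel (hn : 3 ≤ n) (g : Fin n → Fin 3) : pG (fg g) ≤ wheelGraph n := by
  intro a b hab
  obtain ⟨hne', h | h⟩ := hab
  · exact adj_of_fg hn g a b hne' h
  · exact ((adj_of_fg hn g b a (Ne.symm hne') h)).symm

lemma Tg_inj (hn : 3 ≤ n) {g g' : Fin n → Fin 3} (hg : Good g) (hg' : Good g')
    (h : pG (fg g) = pG (fg g')) : g = g' := by
  have hfg : fg g = fg g' :=
    parent_unique 0 (fg g) (fg g') rfl rfl
      (chase hn hg.1 hg.2.1 hg.2.2) (chase hn hg'.1 hg'.2.1 hg'.2.2)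
      (fg_hne hn g) (fg_hne hn g') h
  funext i
  have hv := congrFun hfg (vtx i)
  rcases fin3_cases (g i) with h1 | h1 | h1 <;> rcases fin3_cases (g' i) with h2 | h2 | h2 <;>
    rw [h1, h2] <;> try rfl
  · exfalso
    rw [fg_vtx_zero h1, fg_vtx_one h2] at hv
    exact fin_two_ne hn i (vtx_inj hv.symm)
  · exfalso
    rw [fg_vtx_zero h1, fg_vtx_two h2] at hv
    exact vtx_ne_zero _ hv
  · exfalso
    rw [fg_vtx_one h1, fg_vtx_zero h2] at hv
    exact fin_two_ne hn i (vtx_inj hv)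
  · exfalso
    rw [fg_vtx_one h1, fg_vtx_two h2] at hv
    exact vtx_ne_zero _ hv
  · exfalso
    rw [fg_vtx_two h1, fg_vtx_zero h2] at hv
    exact vtx_ne_zero _ hv.symm
  · exfalso
    rw [fg_vtx_two h1, fg_vtx_one h2] at hv
    exact vtx_ne_zero _ hv.symm

end Wheel2
end WheelAux
namespace WheelAux
open SimpleGraph
open Fin.NatCast Fin.CommRing

section Wheel3
variable {n : ℕ} [NeZero n]

lemma Tg_surj (hn : 3 ≤ n) (T : SimpleGraph (Fin (n+1))) (hle : T ≤ wheelGraph n)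
    (hT : T.IsTree) : ∃ g : Fin n → Fin 3, Good g ∧ pG (fg g) = T := by
  classical
  have huniq : ∀ x : Fin (n+1), ∃! p : T.Walk x 0, p.IsPath := fun x =>
    hT.existsUnique_path x 0
  set P : ∀ x : Fin (n+1), T.Walk x 0 := fun x => (huniq x).choose with hPdef
  have hP : ∀ x, (P x).IsPath := fun x => (huniq x).choose_spec.1
  have hUniq : ∀ x (q : T.Walk x 0), q.IsPath → q = P x := fun x q hq =>
    (huniq x).choose_spec.2 q hq
  set sec : Fin (n+1) → Fin (n+1) := fun x => (P x).getVert 1 with hsecdef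
  have hsec0 : sec 0 = 0 := by
    have h0 : P 0 = Walk.nil := (Walk.isPath_iff_eq_nil (p := P 0)).1 (hP 0)
    show (P 0).getVert 1 = 0
    rw [h0]
    rfl
  -- decomposition of the chosen path at its first step
  have hdec : ∀ x, x ≠ 0 → T.Adj x (sec x) ∧ (P x).length = (P (sec x)).length + 1 := by
    intro x hx
    obtain ⟨y, hadj, q, hq⟩ := Walk.not_nil_iff.1 (Walk.not_nil_of_ne hx (p := P x))
    have hsecx : sec x = y := by
      show (P x).getVert 1 = y
      rw [hq, Walk.getVert_cons_succ, Walk.getVert_zero]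
    have hqpath : q.IsPath := by
      have h2 := hP x
      rw [hq, Walk.cons_isPath_iff] at h2
      exact h2.1
    have hqP : q = P y := hUniq y q hqpath
    constructor
    · rw [hsecx]; exact hadj
    · rw [hsecx, ← hqP, hq, Walk.length_cons]
  -- each tree edge is a parent edge for `sec`
  have hpar : ∀ x y, T.Adj x y → sec x = y ∨ sec y = x := by
    intro x y hxy
    by_cases hy : y ∈ (P x).support
    · left
      have htake : (P x).takeUntil y hy = Walk.cons hxy Walk.nil := by
        have h1 : ((P x).takeUntil y hy).IsPath := (hP x).takeUntil hy
        have h2 : (Walk.cons hxy Walk.nil : T.Walk x y).IsPath := by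
          rw [Walk.cons_isPath_iff]
          exact ⟨Walk.IsPath.nil, by simp [hxy.ne]⟩
        have := hT.IsAcyclic.path_unique ⟨_, h1⟩ ⟨_, h2⟩
        exact congrArg Subtype.val this
      have hspec := (P x).take_spec hy
      show (P x).getVert 1 = y
      rw [← hspec, htake, Walk.cons_append, Walk.nil_append, Walk.getVert_cons_succ, Walk.getVert_zero]
    · right
      have hw : (Walk.cons hxy.symm (P x) : T.Walk y 0).IsPath := by
        rw [Walk.cons_isPath_iff]
        exact ⟨hP x, hy⟩
      have := hUniq y _ hw
      show (P y).getVert 1 = x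
      rw [← this, Walk.getVert_cons_succ, Walk.getVert_zero]
  -- classification of `sec` on rim vertices
  have hclass : ∀ i : Fin n,
      sec (vtx i) = 0 ∨ sec (vtx i) = vtx (i+1) ∨ sec (vtx i) = vtx (i-1) := by
    intro i
    have hadj := (hdec (vtx i) (vtx_ne_zero i)).1
    have hw := hle hadj
    by_cases h0 : sec (vtx i) = 0
    · exact Or.inl h0
    obtain ⟨j, hj⟩ := eq_vtx_of_ne_zero _ h0
    rw [hj] at hw
    rcases wheel_adj_rim_classify hn hw with h | h
    · right; left; rw [hj, h]
    · right; right; rw [hj, show j = i - 1 by rw [h]; ring]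
  set g : Fin n → Fin 3 := fun i =>
    if sec (vtx i) = 0 then 2 else if sec (vtx i) = vtx (i+1) then 1 else 0 with hgdef
  have hg2 : ∀ i : Fin n, g i = 2 ↔ sec (vtx i) = 0 := by
    intro i
    show (if sec (vtx i) = 0 then (2:Fin 3) else if sec (vtx i) = vtx (i+1) then 1 else 0) = 2
      ↔ sec (vtx i) = 0
    split_ifs with h1 h2
    · exact iff_of_true rfl h1
    · exact iff_of_false (by decide) h1
    · exact iff_of_false (by decide) h1
  have hg1 : ∀ i : Fin n, g i = 1 ↔ sec (vtx i) = vtx (i+1) := by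
    intro i
    show (if sec (vtx i) = 0 then (2:Fin 3) else if sec (vtx i) = vtx (i+1) then 1 else 0) = 1
      ↔ sec (vtx i) = vtx (i+1)
    split_ifs with h1 h2
    · refine iff_of_false (by decide) (fun hc => ?_)
      rw [hc] at h1
      exact vtx_ne_zero _ h1
    · exact iff_of_true rfl h2
    · exact iff_of_false (by decide) h2
  have hg0 : ∀ i : Fin n, g i = 0 ↔ sec (vtx i) = vtx (i-1) := by
    intro i
    constructor
    · intro h
      rcases hclass i with hc | hc | hc
      · exfalso; rw [← hg2 i] at hc; rw [h] at hc; exact absurd hc (by decide)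
      · exfalso; rw [← hg1 i] at hc; rw [h] at hc; exact absurd hc (by decide)
      · exact hc
    · intro h
      show (if sec (vtx i) = 0 then (2:Fin 3) else if sec (vtx i) = vtx (i+1) then 1 else 0) = 0
      rw [if_neg, if_neg]
      · rw [h]
        exact fun hc => fin_two_ne hn i (vtx_inj hc).symm
      · rw [h]
        exact vtx_ne_zero _
  have hfg : ∀ i : Fin n, fg g (vtx i) = sec (vtx i) := by
    intro i
    rcases fin3_cases (g i) with h | h | h
    · rw [fg_vtx_zero h, ← (hg0 i).1 h]
    · rw [fg_vtx_one h, ← (hg1 i).1 h]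
    · rw [fg_vtx_two h, ← (hg2 i).1 h]
  -- lengths strictly decrease along `sec`
  have hlen := fun (x : Fin (n+1)) (hx : x ≠ 0) => (hdec x hx).2
  refine ⟨g, ⟨?_, ?_, ?_⟩, ?_⟩
  · -- Ok g
    intro i ⟨h1, h0⟩
    have e1 : sec (vtx i) = vtx (i+1) := (hg1 i).1 h1
    have e0 : sec (vtx (i+1)) = vtx i := by
      have := (hg0 (i+1)).1 h0
      rwa [show i + 1 - 1 = i by ring] at this
    have l1 := hlen (vtx i) (vtx_ne_zero i)
    have l2 := hlen (vtx (i+1)) (vtx_ne_zero (i+1))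
    rw [e1] at l1
    rw [e0] at l2
    omega
  · -- not all 1
    intro hall
    have hstep : ∀ k : ℕ, (P (vtx ((k : Fin n)))).length =
        (P (vtx (((k+1 : ℕ) : Fin n)))).length + 1 := by
      intro k
      have h1 : g ((k : Fin n)) = 1 := by rw [hall]
      have h2 := hlen (vtx ((k : Fin n))) (vtx_ne_zero _)
      rw [(hg1 _).1 h1,
        show ((k : ℕ) : Fin n) + 1 = ((k+1 : ℕ) : Fin n) by push_cast; ring] at h2
      exact h2
    have hmono : ∀ k : ℕ, (P (vtx (0 : Fin n))).length =
        (P (vtx ((k : ℕ) : Fin n))).length + k := by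
      intro k
      induction k with
      | zero =>
        rw [show ((0:ℕ) : Fin n) = 0 by push_cast; ring]
        omega
      | succ k ih => rw [ih, hstep k]; omega
    have := hmono n
    rw [Fin.natCast_self] at this
    omega
  · -- not all 0
    intro hall
    have hstep : ∀ k : ℕ, (P (vtx (0 - (k : Fin n)))).length =
        (P (vtx (0 - ((k+1 : ℕ) : Fin n)))).length + 1 := by
      intro k
      have h1 : g (0 - (k : Fin n)) = 0 := by rw [hall]
      have h2 := hlen (vtx (0 - (k : Fin n))) (vtx_ne_zero _)
      rw [(hg0 _).1 h1,
        show (0 : Fin n) - ((k : ℕ) : Fin n) - 1 = 0 - ((k+1 : ℕ) : Fin n) by push_cast; ring] at h2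
      exact h2
    have hmono : ∀ k : ℕ, (P (vtx (0 : Fin n))).length =
        (P (vtx (0 - ((k : ℕ) : Fin n)))).length + k := by
      intro k
      induction k with
      | zero =>
        rw [show (0 : Fin n) - ((0:ℕ) : Fin n) = 0 by push_cast; ring]
        omega
      | succ k ih => rw [ih, hstep k]; omega
    have := hmono n
    rw [Fin.natCast_self, sub_zero] at this
    omega
  · -- pG (fg g) = T
    apply le_antisymm
    · intro a b hab
      obtain ⟨hne', h | h⟩ := hab
      · by_cases ha : a = 0
        · exfalso; apply hne'; rw [ha] at h ⊢; rw [← h]; rfl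
        obtain ⟨i, rfl⟩ := eq_vtx_of_ne_zero a ha
        rw [hfg i] at h
        rw [← h]
        exact (hdec (vtx i) (vtx_ne_zero i)).1
      · by_cases hb : b = 0
        · exfalso; apply hne'; rw [hb] at h ⊢; rw [← h]; rfl
        obtain ⟨i, rfl⟩ := eq_vtx_of_ne_zero b hb
        rw [hfg i] at h
        rw [← h]
        exact ((hdec (vtx i) (vtx_ne_zero i)).1).symm
    · intro a b hab
      have hne' : a ≠ b := hab.ne
      rcases hpar a b hab with h | h
      · by_cases ha : a = 0
        · exfalso
          rw [ha, hsec0] at h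
          exact (hab.ne) (by rw [ha, ← h])
        obtain ⟨i, rfl⟩ := eq_vtx_of_ne_zero a ha
        exact ⟨hne', Or.inl (by rw [hfg i, h])⟩
      · by_cases hb : b = 0
        · exfalso
          rw [hb, hsec0] at h
          exact (hab.ne) (by rw [hb, ← h])
        obtain ⟨i, rfl⟩ := eq_vtx_of_ne_zero b hb
        exact ⟨hne', Or.inr (by rw [hfg i, h])⟩

end Wheel3
end WheelAux
namespace WheelAux
open SimpleGraph

section Assemble

lemma iso_isAcyclic {V W : Type*} {A : SimpleGraph V} {B : SimpleGraph W} (e : A ≃g B)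
    (hB : B.IsAcyclic) : A.IsAcyclic := by
  intro v c hc
  exact hB (c.map e.toHom)
    ((Walk.map_isCycle_iff_of_injective (e.toEquiv.injective)).2 hc)

lemma iso_isTree {V W : Type*} {A : SimpleGraph V} {B : SimpleGraph W} (e : A ≃g B)
    (hB : B.IsTree) : A.IsTree := by
  obtain ⟨hc, ha⟩ := hB
  exact ⟨e.connected_iff.2 hc, iso_isAcyclic e ha⟩

/-- spanning subgraphs that are trees correspond to tree subgraphs as simple graphs -/
noncomputable def subgraphEquiv {V : Type*} (G : SimpleGraph V) :
    {H : G.Subgraph // H.IsSpanning ∧ H.coe.IsTree} ≃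
      {T : SimpleGraph V // T ≤ G ∧ T.IsTree} where
  toFun H := ⟨H.1.spanningCoe, H.1.spanningCoe_le,
    iso_isTree (H.1.spanningCoeEquivCoeOfSpanning H.2.1) H.2.2⟩
  invFun T := ⟨SimpleGraph.toSubgraph T.1 T.2.1, SimpleGraph.toSubgraph.isSpanning T.1 T.2.1,
    iso_isTree ((SimpleGraph.toSubgraph T.1 T.2.1).spanningCoeEquivCoeOfSpanning
      (SimpleGraph.toSubgraph.isSpanning T.1 T.2.1)).symm T.2.2⟩
  left_inv H := by
    apply Subtype.ext
    apply SimpleGraph.Subgraph.ext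
    · exact (Set.eq_univ_of_forall H.2.1).symm
    · rfl
  right_inv T := by
    apply Subtype.ext
    rfl

end Assemble
end WheelAux
namespace WheelAux
open SimpleGraph

section Final
variable {n : ℕ} [NeZero n]

instance decGood : DecidablePred (fun g : Fin n → Fin 3 => Good g) := fun g =>
  decidable_of_iff ((∀ i : Fin n, ¬(g i = 1 ∧ g (i+1) = 0)) ∧
    g ≠ (fun _ => 1) ∧ g ≠ (fun _ => 0)) Iff.rfl

noncomputable def treeEquiv (hn : 3 ≤ n) : {g : Fin n → Fin 3 // Good g} ≃
    {T : SimpleGraph (Fin (n+1)) // T ≤ wheelGraph n ∧ T.IsTree} :=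
  Equiv.ofBijective (fun g => ⟨pG (fg g.1), Tg_le_wheel hn g.1, Tg_isTree hn g.2⟩)
    ⟨fun a b hab => Subtype.ext (Tg_inj hn a.2 b.2 (congrArg Subtype.val hab)),
     fun T => by
      obtain ⟨g, hg, hT⟩ := Tg_surj hn T.1 T.2.1 T.2.2
      exact ⟨⟨g, hg⟩, Subtype.ext hT⟩⟩

lemma card_good (hn : 3 ≤ n) :
    (Finset.univ.filter (fun g : Fin n → Fin 3 => Good g)).card + 2 = (circ n).card := by
  classical
  have hsplit : circ n = (Finset.univ.filter (fun g : Fin n → Fin 3 => Good g)) ∪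
      {fun _ => 1, fun _ => 0} := by
    ext g
    simp only [circ, Finset.mem_filter, Finset.mem_univ, true_and, Finset.mem_union,
      Finset.mem_insert, Finset.mem_singleton]
    constructor
    · intro hOk
      by_cases h1 : g = fun _ => 1
      · exact Or.inr (Or.inl h1)
      by_cases h0 : g = fun _ => 0
      · exact Or.inr (Or.inr h0)
      · exact Or.inl ⟨hOk, h1, h0⟩
    · rintro (⟨hOk, -, -⟩ | rfl | rfl)
      · exact hOk
      · intro i hi; exact absurd hi.2 (by simp)
      · intro i hi; exact absurd hi.1 (by simp)
  have hmem : (fun _ => (1 : Fin 3)) ∉ ({fun _ => 0} : Finset (Fin n → Fin 3)) := by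
    rw [Finset.mem_singleton]
    intro h
    have := congrFun h 0
    exact absurd this (by decide)
  have hdisj : Disjoint (Finset.univ.filter (fun g : Fin n → Fin 3 => Good g))
      ({fun _ => 1, fun _ => 0} : Finset (Fin n → Fin 3)) := by
    rw [Finset.disjoint_left]
    intro g hg hmem2
    rw [Finset.mem_filter] at hg
    rw [Finset.mem_insert, Finset.mem_singleton] at hmem2
    rcases hmem2 with h | h
    · exact hg.2.2.1 h
    · exact hg.2.2.2 h
  rw [hsplit, Finset.card_union_of_disjoint hdisj, Finset.card_insert_of_notMem hmem,
    Finset.card_singleton]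

end Final
end WheelAux

theorem wheel_spanning_trees (n : ℕ) (hn : 3 ≤ n) :
    (spanningTreeCount (wheelGraph n) : ℝ) =
      -2 + ((3 + Real.sqrt 5) / 2) ^ n + ((3 - Real.sqrt 5) / 2) ^ n := by
  haveI : NeZero n := ⟨by omega⟩
  have hcard : spanningTreeCount (wheelGraph n) =
      (Finset.univ.filter (fun g : Fin n → Fin 3 => WheelAux.Good g)).card := by
    rw [spanningTreeCount,
      Nat.card_congr ((WheelAux.subgraphEquiv (wheelGraph n)).trans
        (WheelAux.treeEquiv hn).symm),
      Nat.card_eq_fintype_card, Fintype.card_subtype]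
  have h2 := WheelAux.card_good hn
  have h3 := WheelAux.circ_card_real n (by omega)
  rw [hcard]
  have h4 : ((Finset.univ.filter (fun g : Fin n → Fin 3 => WheelAux.Good g)).card : ℝ)
      = ((WheelAux.circ n).card : ℝ) - 2 := by
    rw [← h2]; push_cast; ring
  rw [h4, h3]; ring
end

section
/- For integers n ≥ 2 and a₁,…,aₙ ≥ 2, the number of spanning trees of the generalized theta graph Θ(a₁,…,aₙ) equals ∑_{i=1}^{n} ∏_{j≠i} a_j. (Equivalently, the determinant of the alternating pretzel link P(a₁,…,aₙ) equals ∑_{i=1}^{n} ∏_{j≠i} a_j.) -/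
/-- The generalized theta graph `Θ(a₁, …, aₙ)`: two vertices `u = Sum.inl 0` and
`v = Sum.inl 1` joined by `n` internally disjoint paths, the `i`-th path having
`a i` edges (so `a i - 1` internal vertices `Sum.inr ⟨i, 0⟩, …, Sum.inr ⟨i, a i - 2⟩`). -/
def thetaGraph (n : ℕ) (a : Fin n → ℕ) :
    SimpleGraph (Fin 2 ⊕ (Σ i : Fin n, Fin (a i - 1))) :=
  SimpleGraph.fromRel (fun x y =>
    match x, y with
    | Sum.inl u, Sum.inr ⟨i, k⟩ =>
        (u = 0 ∧ (k : ℕ) = 0) ∨ (u = 1 ∧ (k : ℕ) = a i - 2)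
    | Sum.inr ⟨i, k⟩, Sum.inr ⟨j, l⟩ => (i : ℕ) = (j : ℕ) ∧ (k : ℕ) + 1 = (l : ℕ)
    | _, _ => False)

namespace Theta

variable {n : ℕ} {a : Fin n → ℕ}

abbrev V (n : ℕ) (a : Fin n → ℕ) := Fin 2 ⊕ (Σ i : Fin n, Fin (a i - 1))

def lft (i : Fin n) (k : ℕ) : V n a :=
  if h : 0 < k ∧ k < a i then Sum.inr ⟨i, ⟨k - 1, by omega⟩⟩ else Sum.inl 0

def rgt (i : Fin n) (k : ℕ) : V n a :=
  if h : k < a i - 1 then Sum.inr ⟨i, ⟨k, by omega⟩⟩ else Sum.inl 1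

lemma lft_zero (i : Fin n) : (lft i 0 : V n a) = Sum.inl 0 := by simp [lft]

lemma lft_pos {i : Fin n} {k : ℕ} (h0 : 0 < k) (h : k < a i) :
    (lft i k : V n a) = Sum.inr ⟨i, ⟨k - 1, by omega⟩⟩ := by simp [lft, h0, h]

lemma rgt_mid {i : Fin n} {k : ℕ} (h : k < a i - 1) :
    (rgt i k : V n a) = Sum.inr ⟨i, ⟨k, by omega⟩⟩ := by simp [rgt, h]

lemma rgt_last {i : Fin n} {k : ℕ} (h : ¬ k < a i - 1) :
    (rgt i k : V n a) = Sum.inl 1 := by simp [rgt, h]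

lemma inr_eq_inr {i j : Fin n} {x : Fin (a i - 1)} {y : Fin (a j - 1)} :
    (Sum.inr ⟨i, x⟩ : V n a) = Sum.inr ⟨j, y⟩ ↔ i = j ∧ (x : ℕ) = (y : ℕ) := by
  constructor
  · intro h
    have h' := Sum.inr.inj h
    injection h' with h1 h2
    subst h1
    exact ⟨rfl, congrArg Fin.val (eq_of_heq h2)⟩
  · rintro ⟨rfl, h⟩
    rw [Fin.val_injective h]

/-- `x,y` are the endpoints (in some order) of the `k`-th edge of path `i`. -/
def EMatch (x y : V n a) (i : Fin n) (k : ℕ) : Prop :=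
  (x = lft i k ∧ y = rgt i k) ∨ (x = rgt i k ∧ y = lft i k)

lemma EMatch.symm {x y : V n a} {i : Fin n} {k : ℕ} (h : EMatch x y i k) : EMatch y x i k := by
  rcases h with ⟨h1, h2⟩ | ⟨h1, h2⟩
  · exact Or.inr ⟨h2, h1⟩
  · exact Or.inl ⟨h2, h1⟩

lemma lft_ne_rgt {i : Fin n} {k : ℕ} : (lft i k : V n a) ≠ rgt i k := by
  unfold lft rgt
  split_ifs with h1 h2 h2
  · rw [Ne, inr_eq_inr]
    simp only [Fin.val_mk, eq_self_iff_true, true_and]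
    omega
  · simp
  · simp
  · simp

variable (ha : ∀ i, 2 ≤ a i)
include ha

lemma theta_adj {x y : V n a} :
    (thetaGraph n a).Adj x y ↔ ∃ i k, k < a i ∧ EMatch x y i k := by
  rw [thetaGraph, SimpleGraph.fromRel_adj]
  constructor
  · rintro ⟨hne, hr⟩
    rcases x with w | ⟨i, t⟩ <;> rcases y with w' | ⟨j, s⟩
    · exfalso; rcases hr with h | h <;> exact h
    · -- inl w, inr ⟨j, s⟩
      have hr' : (w = 0 ∧ (s : ℕ) = 0) ∨ (w = 1 ∧ (s : ℕ) = a j - 2) := by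
        rcases hr with h | h
        · exact h
        · exact absurd h (by simp)
      have haj := ha j
      rcases hr' with ⟨rfl, hs⟩ | ⟨rfl, hs⟩
      · refine ⟨j, 0, by omega, Or.inl ⟨(lft_zero j).symm, ?_⟩⟩
        rw [rgt_mid (by omega), inr_eq_inr]
        exact ⟨rfl, by simp [hs]⟩
      · refine ⟨j, a j - 1, by omega, Or.inr ⟨by rw [rgt_last (by omega)], ?_⟩⟩
        rw [lft_pos (by omega) (by omega), inr_eq_inr]
        exact ⟨rfl, by simp; omega⟩
    · -- inr, inl : symmetric
      have hr' : (w' = 0 ∧ (t : ℕ) = 0) ∨ (w' = 1 ∧ (t : ℕ) = a i - 2) := by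
        rcases hr with h | h
        · exact absurd h (by simp)
        · exact h
      have hai := ha i
      rcases hr' with ⟨rfl, hs⟩ | ⟨rfl, hs⟩
      · refine ⟨i, 0, by omega, Or.inr ⟨?_, (lft_zero i).symm⟩⟩
        rw [rgt_mid (by omega), inr_eq_inr]
        exact ⟨rfl, by simp [hs]⟩
      · refine ⟨i, a i - 1, by omega, Or.inl ⟨?_, by rw [rgt_last (by omega)]⟩⟩
        rw [lft_pos (by omega) (by omega), inr_eq_inr]
        exact ⟨rfl, by simp; omega⟩
    · -- inr inr
      have hr' : ((i : ℕ) = j ∧ (t : ℕ) + 1 = s) ∨ ((j : ℕ) = i ∧ (s : ℕ) + 1 = t) := hr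
      have hs := s.isLt
      have ht := t.isLt
      rcases hr' with ⟨hij, hts⟩ | ⟨hij, hts⟩
      · have hij' : i = j := Fin.val_injective hij
        subst hij'
        refine ⟨i, (s : ℕ), by omega, Or.inl ⟨?_, ?_⟩⟩
        · rw [lft_pos (by omega) (by omega), inr_eq_inr]; exact ⟨rfl, by simp; omega⟩
        · rw [rgt_mid (by omega), inr_eq_inr]; exact ⟨rfl, by simp⟩
      · have hij' : i = j := (Fin.val_injective hij).symm
        subst hij'
        refine ⟨i, (t : ℕ), by omega, Or.inr ⟨?_, ?_⟩⟩
        · rw [rgt_mid (by omega), inr_eq_inr]; exact ⟨rfl, by simp⟩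
        · rw [lft_pos (by omega) (by omega), inr_eq_inr]; exact ⟨rfl, by simp; omega⟩
  · rintro ⟨i, k, hk, hm⟩
    have hai := ha i
    have hstep : ∀ u v : V n a, u = lft i k → v = rgt i k →
        u ≠ v ∧ ((match u, v with
          | Sum.inl w, Sum.inr ⟨i, t⟩ =>
              (w = 0 ∧ (t : ℕ) = 0) ∨ (w = 1 ∧ (t : ℕ) = a i - 2)
          | Sum.inr ⟨i, t⟩, Sum.inr ⟨j, s⟩ => (i : ℕ) = (j : ℕ) ∧ (t : ℕ) + 1 = (s : ℕ)
          | _, _ => False) ∨ (match v, u with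
          | Sum.inl w, Sum.inr ⟨i, t⟩ =>
              (w = 0 ∧ (t : ℕ) = 0) ∨ (w = 1 ∧ (t : ℕ) = a i - 2)
          | Sum.inr ⟨i, t⟩, Sum.inr ⟨j, s⟩ => (i : ℕ) = (j : ℕ) ∧ (t : ℕ) + 1 = (s : ℕ)
          | _, _ => False)) := by
      rintro u v rfl rfl
      refine ⟨lft_ne_rgt, ?_⟩
      by_cases h0 : k = 0
      · subst h0
        rw [lft_zero, rgt_mid (by omega)]
        exact Or.inl (Or.inl ⟨rfl, rfl⟩)
      · by_cases hlast : k < a i - 1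
        · rw [lft_pos (by omega) hk, rgt_mid hlast]
          exact Or.inl ⟨rfl, by simp; omega⟩
        · rw [lft_pos (by omega) hk, rgt_last hlast]
          exact Or.inr (Or.inr ⟨rfl, by simp; omega⟩)
    rcases hm with ⟨hx, hy⟩ | ⟨hx, hy⟩
    · exact hstep x y hx hy
    · obtain ⟨hne, hor⟩ := hstep y x hy hx
      exact ⟨hne.symm, hor.symm⟩

lemma ematch_unique {i j : Fin n} {k l : ℕ} (hk : k < a i) (hl : l < a j)
    (h : EMatch (lft i k : V n a) (rgt i k) j l) : i = j ∧ k = l := by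
  have hai := ha i; have haj := ha j
  rcases h with ⟨h1, h2⟩ | ⟨h1, h2⟩
  · by_cases hk0 : k = 0 <;> by_cases hl0 : l = 0
    · subst hk0; subst hl0
      rw [rgt_mid (by omega), rgt_mid (by omega), inr_eq_inr] at h2
      exact ⟨h2.1, rfl⟩
    · subst hk0
      rw [lft_zero, lft_pos (by omega) hl] at h1
      exact absurd h1 (by simp)
    · subst hl0
      rw [lft_zero, lft_pos (by omega) hk] at h1
      exact absurd h1 (by simp)
    · rw [lft_pos (by omega) hk, lft_pos (by omega) hl, inr_eq_inr] at h1
      obtain ⟨hij, hkl⟩ := h1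
      refine ⟨hij, by simp at hkl; omega⟩
  · exfalso
    by_cases hk0 : k = 0
    · subst hk0
      rw [lft_zero] at h1
      by_cases hjl : l < a j - 1
      · rw [rgt_mid hjl] at h1; exact absurd h1 (by simp)
      · rw [rgt_last hjl] at h1; exact absurd h1 (by simp)
    · by_cases hjl : l < a j - 1
      · rw [lft_pos (by omega) hk, rgt_mid hjl, inr_eq_inr] at h1
        obtain ⟨hij, hkl⟩ := h1
        simp at hkl
        by_cases hl0 : l = 0
        · subst hl0
          rw [lft_zero] at h2
          by_cases hik : k < a i - 1
          · rw [rgt_mid hik] at h2; exact absurd h2 (by simp)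
          · rw [rgt_last hik] at h2; exact absurd h2 (by simp)
        · rw [lft_pos (by omega) hl] at h2
          by_cases hik : k < a i - 1
          · rw [rgt_mid hik, inr_eq_inr] at h2
            obtain ⟨-, hkl'⟩ := h2
            simp at hkl'
            omega
          · rw [rgt_last hik] at h2; exact absurd h2 (by simp)
      · rw [lft_pos (by omega) hk, rgt_last hjl] at h1
        exact absurd h1 (by simp)

omit ha in
lemma walk_ind {R : SimpleGraph (V n a)} {P : V n a → Prop}
    (hcl : ∀ x y, R.Adj x y → P x → P y) {x y : V n a} (w : R.Walk x y) :
    P x → P y := by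
  induction w with
  | nil => exact id
  | cons h' p ih => exact fun hx => ih (hcl _ _ h' hx)

section Generic

variable {R : SimpleGraph (V n a)} {pres : Fin n → ℕ → Prop}

omit ha in
lemma reach_prefix (hLow : ∀ i k, k < a i → pres i k → R.Adj (lft i k) (rgt i k))
    (i : Fin n) (c : ℕ) (hc : c < a i) (h : ∀ m, m ≤ c → pres i m) :
    R.Reachable (Sum.inl 0) (rgt i c) := by
  induction c with
  | zero =>
    have := (hLow i 0 hc (h 0 le_rfl)).reachable
    rwa [lft_zero] at this
  | succ c ih =>
    have h1 : R.Adj (lft i (c + 1)) (rgt i (c + 1)) := hLow _ _ hc (h _ le_rfl)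
    have h2 : (rgt i c : V n a) = lft i (c + 1) := by
      rw [rgt_mid (by omega), lft_pos (by omega) (by omega), inr_eq_inr]
      exact ⟨rfl, by simp⟩
    exact (ih (by omega) (fun m hm => h m (by omega))).trans (h2 ▸ h1.reachable)

omit ha in
lemma reach_suffix (hLow : ∀ i k, k < a i → pres i k → R.Adj (lft i k) (rgt i k))
    (i : Fin n) (c : ℕ) (hc : c < a i) (h : ∀ m, c ≤ m → m < a i → pres i m) :
    R.Reachable (lft i c) (Sum.inl 1) := by
  have key : ∀ d c, a i - c ≤ d → c < a i → (∀ m, c ≤ m → m < a i → pres i m) →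
      R.Reachable (lft i c) (Sum.inl 1) := by
    intro d
    induction d with
    | zero => intro c h1 h2 _; omega
    | succ d ih =>
      intro c h1 h2 h3
      have hadj := hLow i c h2 (h3 c le_rfl h2)
      by_cases hlast : c < a i - 1
      · have h4 : (rgt i c : V n a) = lft i (c + 1) := by
          rw [rgt_mid hlast, lft_pos (by omega) (by omega), inr_eq_inr]
          exact ⟨rfl, by simp⟩
        exact hadj.reachable.trans
          (h4 ▸ ih (c + 1) (by omega) (by omega) (fun m hm hm' => h3 m (by omega) hm'))
      · have h4 : (rgt i c : V n a) = Sum.inl 1 := rgt_last hlast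
        exact h4 ▸ hadj.reachable
  exact key _ c le_rfl hc h

omit ha in
lemma reach_full (hLow : ∀ i k, k < a i → pres i k → R.Adj (lft i k) (rgt i k))
    (i : Fin n) (hi : 0 < a i) (h : ∀ m, m < a i → pres i m) :
    R.Reachable (Sum.inl 0) (Sum.inl 1) := by
  have := reach_suffix hLow i 0 hi (fun m _ hm => h m hm)
  rwa [lft_zero] at this

/-- Vertices strictly between two gaps `c < d` on path `i`. -/
def segP (i : Fin n) (c d : ℕ) : V n a → Prop
  | Sum.inl _ => False
  | Sum.inr ⟨j, t⟩ => j = i ∧ c ≤ (t : ℕ) ∧ (t : ℕ) < d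

lemma segP_closed (hUp : ∀ x y, R.Adj x y → ∃ i k, k < a i ∧ pres i k ∧ EMatch x y i k)
    (i : Fin n) {c d : ℕ} (hcd : c < d) (hd : d < a i)
    (hc' : ¬pres i c) (hd' : ¬pres i d) :
    ∀ x y, R.Adj x y → segP i c d x → segP i c d y := by
  intro x y hadj hx
  obtain ⟨j, k, hk, hp, hm⟩ := hUp x y hadj
  have haj := ha j
  rcases hm with ⟨hx', hy'⟩ | ⟨hx', hy'⟩
  · subst hx'; subst hy'
    by_cases hk0 : k = 0
    · subst hk0; rw [lft_zero] at hx; exact absurd hx (by simp [segP])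
    · rw [lft_pos (by omega) hk] at hx
      obtain ⟨rfl, h1, h2⟩ := hx
      have hkc : k ≠ c := fun e => hc' (e ▸ hp)
      have hkd : k ≠ d := fun e => hd' (e ▸ hp)
      simp only [Fin.val_mk] at h1 h2
      have hklt : k < a j - 1 := by omega
      rw [rgt_mid hklt]
      exact ⟨rfl, by simp; omega⟩
  · subst hx'; subst hy'
    by_cases hkl : k < a j - 1
    · rw [rgt_mid hkl] at hx
      obtain ⟨rfl, h1, h2⟩ := hx
      simp only [Fin.val_mk] at h1 h2
      have hkc : k ≠ c := fun e => hc' (e ▸ hp)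
      rw [lft_pos (by omega) hk]
      exact ⟨rfl, by simp; omega⟩
    · rw [rgt_last hkl] at hx; exact absurd hx (by simp [segP])

/-- Vertices on the `u` side when every path `p` has a gap at `γ p`. -/
def uP (γ : Fin n → ℕ) : V n a → Prop
  | Sum.inl w => w = 0
  | Sum.inr ⟨p, t⟩ => (t : ℕ) < γ p

lemma uP_closed (hUp : ∀ x y, R.Adj x y → ∃ i k, k < a i ∧ pres i k ∧ EMatch x y i k)
    (γ : Fin n → ℕ) (hγ : ∀ p, γ p < a p) (hmiss : ∀ p, ¬pres p (γ p)) :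
    ∀ x y, R.Adj x y → uP γ x → uP γ y := by
  intro x y hadj hx
  obtain ⟨j, k, hk, hp, hm⟩ := hUp x y hadj
  have haj := ha j
  have hγj := hγ j
  have hkγ : k ≠ γ j := fun e => hmiss j (e ▸ hp)
  rcases hm with ⟨hx', hy'⟩ | ⟨hx', hy'⟩
  · subst hx'; subst hy'
    by_cases hk0 : k = 0
    · subst hk0
      have h0γ : 0 < γ j := by omega
      rw [rgt_mid (by omega)]
      simpa [uP] using h0γ
    · rw [lft_pos (by omega) hk] at hx
      simp only [uP, Fin.val_mk] at hx
      have : k < γ j := by omega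
      rw [rgt_mid (by omega)]
      simpa [uP] using this
  · subst hx'; subst hy'
    by_cases hkl : k < a j - 1
    · rw [rgt_mid hkl] at hx
      simp only [uP, Fin.val_mk] at hx
      by_cases hk0 : k = 0
      · subst hk0; rw [lft_zero]; simp [uP]
      · rw [lft_pos (by omega) hk]
        simp only [uP, Fin.val_mk]
        omega
    · rw [rgt_last hkl] at hx
      simp [uP] at hx

end Generic

/-- The index data: a distinguished complete path `i`, and a chosen missing edge on
every other path. -/
abbrev Dat (n : ℕ) (a : Fin n → ℕ) := (i : Fin n) × ((j : {j : Fin n // j ≠ i}) → Fin (a j.1))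

/-- Which edges are present, for the spanning tree determined by `d`. -/
def presD (d : Dat n a) (j : Fin n) (k : ℕ) : Prop :=
  ∀ h : j ≠ d.1, k ≠ (d.2 ⟨j, h⟩ : ℕ)

/-- The spanning subgraph determined by `d`. -/
def Hsub (ha : ∀ i, 2 ≤ a i) (d : Dat n a) : (thetaGraph n a).Subgraph where
  verts := Set.univ
  Adj x y := ∃ i k, k < a i ∧ presD d i k ∧ EMatch x y i k
  adj_sub := by
    rintro x y ⟨i, k, hk, -, hm⟩
    exact (theta_adj ha).mpr ⟨i, k, hk, hm⟩
  edge_vert := fun _ => trivial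
  symm := by
    constructor
    rintro x y ⟨i, k, hk, hp, hm⟩
    exact ⟨i, k, hk, hp, hm.symm⟩

lemma Hsub_hLow (d : Dat n a) :
    ∀ i k, k < a i → presD d i k → (Hsub ha d).spanningCoe.Adj (lft i k) (rgt i k) :=
  fun i k hk hp => ⟨i, k, hk, hp, Or.inl ⟨rfl, rfl⟩⟩

lemma Hsub_hUp (d : Dat n a) :
    ∀ x y, (Hsub ha d).spanningCoe.Adj x y →
      ∃ i k, k < a i ∧ presD d i k ∧ EMatch x y i k := fun _ _ h => h

lemma Hsub_pres {d : Dat n a} {i : Fin n} {k : ℕ} (hk : k < a i) :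
    (Hsub ha d).Adj (lft i k) (rgt i k) ↔ presD d i k := by
  constructor
  · rintro ⟨j, l, hl, hp, hm⟩
    obtain ⟨rfl, rfl⟩ := ematch_unique ha hk hl hm
    exact hp
  · intro hp
    exact ⟨i, k, hk, hp, Or.inl ⟨rfl, rfl⟩⟩

/-- `hUp`/`hLow` for a spanning-coe subgraph. -/
lemma subgraph_hUp (H : (thetaGraph n a).Subgraph) :
    ∀ x y, H.spanningCoe.Adj x y →
      ∃ i k, k < a i ∧ H.Adj (lft i k) (rgt i k) ∧ EMatch x y i k := by
  intro x y hxy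
  obtain ⟨i, k, hk, hm⟩ := (theta_adj ha).mp (H.adj_sub hxy)
  refine ⟨i, k, hk, ?_, hm⟩
  rcases hm with ⟨h1, h2⟩ | ⟨h1, h2⟩
  · exact h1 ▸ h2 ▸ (hxy : H.Adj x y)
  · exact (h1 ▸ h2 ▸ (hxy : H.Adj x y)).symm

omit ha in
/-- Removing the edge `(j₀, k₀)` from a graph `R` with presence function `pres`. -/
lemma deleted_hUp {R : SimpleGraph (V n a)} {pres : Fin n → ℕ → Prop}
    (hUp : ∀ x y, R.Adj x y → ∃ i k, k < a i ∧ pres i k ∧ EMatch x y i k)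
    (j₀ : Fin n) (k₀ : ℕ) :
    ∀ x y, (R \ SimpleGraph.fromEdgeSet {s(lft j₀ k₀, rgt j₀ k₀)}).Adj x y →
      ∃ i k, k < a i ∧ (pres i k ∧ ¬(i = j₀ ∧ k = k₀)) ∧ EMatch x y i k := by
  intro x y hxy
  rw [SimpleGraph.sdiff_adj] at hxy
  obtain ⟨hR, hne⟩ := hxy
  obtain ⟨i, k, hk, hp, hm⟩ := hUp x y hR
  refine ⟨i, k, hk, ⟨hp, ?_⟩, hm⟩
  rintro ⟨rfl, rfl⟩
  apply hne
  rw [SimpleGraph.fromEdgeSet_adj]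
  refine ⟨?_, hR.ne⟩
  rcases hm with ⟨h1, h2⟩ | ⟨h1, h2⟩
  · rw [h1, h2]; rfl
  · rw [h1, h2]; simp [Sym2.eq_swap]

lemma deleted_hLow {R : SimpleGraph (V n a)} {pres : Fin n → ℕ → Prop}
    (hLow : ∀ i k, k < a i → pres i k → R.Adj (lft i k) (rgt i k))
    {j₀ : Fin n} {k₀ : ℕ} (hk₀ : k₀ < a j₀) :
    ∀ i k, k < a i → (pres i k ∧ ¬(i = j₀ ∧ k = k₀)) →
      (R \ SimpleGraph.fromEdgeSet {s(lft j₀ k₀, rgt j₀ k₀)}).Adj (lft i k) (rgt i k) := by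
  intro i k hk ⟨hp, hne⟩
  rw [SimpleGraph.sdiff_adj]
  refine ⟨hLow i k hk hp, ?_⟩
  rw [SimpleGraph.fromEdgeSet_adj]
  rintro ⟨he, -⟩
  rw [Set.mem_singleton_iff, Sym2.eq_iff] at he
  exact hne (ematch_unique ha hk hk₀ he)

lemma Hsub_connected (d : Dat n a) : (Hsub ha d).spanningCoe.Connected := by
  rw [SimpleGraph.connected_iff_exists_forall_reachable]
  refine ⟨Sum.inl 0, ?_⟩
  have hLow := Hsub_hLow ha d
  have hfull : ∀ m, m < a d.1 → presD d d.1 m := fun m _ h => absurd rfl h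
  have h01 : (Hsub ha d).spanningCoe.Reachable (Sum.inl 0) (Sum.inl 1) :=
    reach_full hLow d.1 (by have := ha d.1; omega) hfull
  intro x
  rcases x with w | ⟨j, t⟩
  · fin_cases w
    · exact SimpleGraph.Reachable.refl _
    · exact h01
  · have ht := t.isLt
    by_cases hj : j = d.1
    · subst hj
      have := reach_prefix hLow d.1 (t : ℕ) (by omega) (fun m _ => hfull m (by omega))
      rwa [rgt_mid (by omega), Fin.eta] at this
    · set g : ℕ := (d.2 ⟨j, hj⟩ : ℕ) with hgdef
      have hgl : g < a j := (d.2 ⟨j, hj⟩).isLt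
      rcases lt_or_ge (t : ℕ) g with hlt | hle
      · have hpre : ∀ m, m ≤ (t : ℕ) → presD d j m := by
          intro m hm h
          have : (d.2 ⟨j, h⟩ : ℕ) = g := rfl
          omega
        have := reach_prefix hLow j (t : ℕ) (by omega) hpre
        rwa [rgt_mid (by omega), Fin.eta] at this
      · have hsuf : ∀ m, (t : ℕ) + 1 ≤ m → m < a j → presD d j m := by
          intro m hm hm' h
          have : (d.2 ⟨j, h⟩ : ℕ) = g := rfl
          omega
        have h2 := reach_suffix hLow j ((t : ℕ) + 1) (by omega) hsuf
        rw [lft_pos (by omega) (by omega)] at h2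
        have he : (Sum.inr ⟨j, ⟨(t : ℕ) + 1 - 1, by omega⟩⟩ : V n a) = Sum.inr ⟨j, t⟩ := by
          rw [inr_eq_inr]; exact ⟨rfl, by simp⟩
        rw [he] at h2
        exact h01.trans h2.symm

lemma Hsub_acyclic (d : Dat n a) : (Hsub ha d).spanningCoe.IsAcyclic := by
  rw [SimpleGraph.isAcyclic_iff_forall_adj_isBridge]
  intro x y hxy
  obtain ⟨j, k, hk, hp, hm⟩ := Hsub_hUp (ha := ha) d x y hxy
  have key : (Hsub ha d).spanningCoe.IsBridge s(lft j k, rgt j k) := by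
    rw [SimpleGraph.isBridge_iff]
    intro hreach
    obtain ⟨w⟩ := hreach
    have hUp' := deleted_hUp (Hsub_hUp (ha := ha) d) j k
    by_cases hj : j = d.1
    · subst hj
      set γ : Fin n → ℕ := fun p => if h : p = d.1 then k else (d.2 ⟨p, h⟩ : ℕ) with hγdef
      have hγ : ∀ p, γ p < a p := by
        intro p
        by_cases h : p = d.1
        · subst h; simpa [hγdef] using hk
        · simpa [hγdef, h] using (d.2 ⟨p, h⟩).isLt
      have hmiss : ∀ p, ¬(presD d p (γ p) ∧ ¬(p = d.1 ∧ γ p = k)) := by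
        intro p
        by_cases h : p = d.1
        · subst h; simp [hγdef]
        · rintro ⟨hpd, -⟩
          exact hpd h (by simp [hγdef, h])
      have hclosure := uP_closed ha hUp' γ hγ hmiss
      have h1 : uP γ (lft d.1 k : V n a) := by
        by_cases hk0 : k = 0
        · subst hk0; rw [lft_zero]; simp [uP]
        · rw [lft_pos (by omega) hk]
          simp only [uP, Fin.val_mk, hγdef]
          simp
          omega
      have h2 : ¬ uP γ (rgt d.1 k : V n a) := by
        by_cases hkl : k < a d.1 - 1
        · rw [rgt_mid hkl]
          simp only [uP, Fin.val_mk, hγdef]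
          simp
        · rw [rgt_last hkl]
          simp [uP]
      exact h2 (walk_ind hclosure w h1)
    · set g : ℕ := (d.2 ⟨j, hj⟩ : ℕ) with hgdef
      have hgl : g < a j := (d.2 ⟨j, hj⟩).isLt
      have hmissg : ¬(presD d j g ∧ ¬(j = j ∧ g = k)) := by
        rintro ⟨hpd, -⟩
        exact hpd hj rfl
      have hkg : k ≠ g := hp hj
      have hmissk : ¬(presD d j k ∧ ¬(j = j ∧ k = k)) := by
        rintro ⟨-, hq⟩
        exact hq ⟨rfl, rfl⟩
      rcases lt_or_gt_of_ne hkg with hlt | hgt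
      · have hclosure := segP_closed ha hUp' j hlt hgl hmissk hmissg
        have h1 : segP j k g (rgt j k : V n a) := by
          rw [rgt_mid (by omega)]
          exact ⟨rfl, by simp, by simp; omega⟩
        have h2 : ¬ segP j k g (lft j k : V n a) := by
          by_cases hk0 : k = 0
          · subst hk0; rw [lft_zero]; simp [segP]
          · rw [lft_pos (by omega) hk]
            rintro ⟨-, hc, -⟩
            simp at hc
            omega
        exact h2 (walk_ind hclosure w.reverse h1)
      · have hclosure := segP_closed ha hUp' j hgt hk hmissg hmissk
        have h1 : segP j g k (lft j k : V n a) := by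
          rw [lft_pos (by omega) hk]
          exact ⟨rfl, by simp; omega, by simp; omega⟩
        have h2 : ¬ segP j g k (rgt j k : V n a) := by
          by_cases hkl : k < a j - 1
          · rw [rgt_mid hkl]
            rintro ⟨-, -, hc⟩
            simp at hc
          · rw [rgt_last hkl]; simp [segP]
        exact h2 (walk_ind hclosure w h1)
  rcases hm with ⟨h1, h2⟩ | ⟨h1, h2⟩
  · rw [h1, h2]; exact key
  · rw [h1, h2, Sym2.eq_swap]; exact key

omit ha in
lemma iso_isAcyclic {α β : Type*} {G : SimpleGraph α} {H : SimpleGraph β} (φ : G ≃g H)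
    (h : H.IsAcyclic) : G.IsAcyclic := fun _ c hc =>
  h (c.map φ.toHom) (hc.map (φ.toEquiv.injective))

lemma Hsub_spanning (d : Dat n a) : (Hsub ha d).IsSpanning := fun _ => trivial

lemma Hsub_isTree (d : Dat n a) : (Hsub ha d).coe.IsTree := by
  have iso := (Hsub ha d).spanningCoeEquivCoeOfSpanning (Hsub_spanning ha d)
  constructor
  · exact (SimpleGraph.Iso.connected_iff iso).mp (Hsub_connected ha d)
  · exact iso_isAcyclic iso.symm (Hsub_acyclic ha d)

lemma Hsub_surj (H : (thetaGraph n a).Subgraph) (hsp : H.IsSpanning)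
    (htree : H.coe.IsTree) : ∃ d : Dat n a, Hsub ha d = H := by
  have iso := H.spanningCoeEquivCoeOfSpanning hsp
  have hConn : H.spanningCoe.Connected :=
    (SimpleGraph.Iso.connected_iff iso).mpr htree.isConnected
  have hAcy : H.spanningCoe.IsAcyclic := iso_isAcyclic iso htree.2
  have hUpH := subgraph_hUp ha H
  have hLowH : ∀ i k, k < a i → H.Adj (lft i k) (rgt i k) →
      H.spanningCoe.Adj (lft i k) (rgt i k) := fun _ _ _ hp => hp
  have no2 : ∀ (j : Fin n) (c e : ℕ), c < e → e < a j →
      ¬H.Adj (lft j c) (rgt j c) → ¬H.Adj (lft j e) (rgt j e) → False := by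
    intro j c e hce he hc' he'
    have hclosure := segP_closed ha hUpH j hce he hc' he'
    obtain ⟨w⟩ := hConn.preconnected (Sum.inr ⟨j, ⟨c, by omega⟩⟩ : V n a) (Sum.inl 0)
    exact walk_ind hclosure w ⟨rfl, by simp, by simp; omega⟩
  have hcomplete : ∃ i0, ∀ m, m < a i0 → H.Adj (lft i0 m) (rgt i0 m) := by
    by_contra hno
    push_neg at hno
    choose γ hγ1 hγ2 using hno
    have hclosure := uP_closed ha hUpH γ hγ1 hγ2
    obtain ⟨w⟩ := hConn.preconnected (Sum.inl 0 : V n a) (Sum.inl 1)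
    have := walk_ind hclosure w (by simp [uP])
    simp [uP] at this
  obtain ⟨i0, hi0⟩ := hcomplete
  have honecomplete : ∀ j, j ≠ i0 → ∃ m, m < a j ∧ ¬H.Adj (lft j m) (rgt j m) := by
    intro j hj
    by_contra hno
    push_neg at hno
    have ha0 := ha i0
    have hbr := (SimpleGraph.isAcyclic_iff_forall_adj_isBridge.mp hAcy)
      (hLowH i0 0 (by omega) (hi0 0 (by omega)))
    rw [SimpleGraph.isBridge_iff] at hbr
    refine hbr ?_
    have hLow' := deleted_hLow ha (R := H.spanningCoe)
      (pres := fun i k => H.Adj (lft i k) (rgt i k))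
      (fun i k _ hp => hp) (j₀ := i0) (k₀ := 0) (by omega)
    have r1 := reach_suffix hLow' i0 1 (by omega)
      (fun m hm hm' => ⟨hi0 m hm', by omega⟩)
    have r2 := reach_full hLow' j (by have := ha j; omega)
      (fun m hm => ⟨hno m hm, by rintro ⟨rfl, -⟩; exact hj rfl⟩)
    have he : (lft i0 1 : V n a) = rgt i0 0 := by
      rw [lft_pos (by omega) (by omega), rgt_mid (by omega), inr_eq_inr]
      exact ⟨rfl, by simp⟩
    rw [he] at r1
    have r3 := r2.trans r1.symm
    rwa [lft_zero]
  choose g hg1 hg2 using honecomplete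
  refine ⟨⟨i0, fun jp => ⟨g jp.1 jp.2, hg1 jp.1 jp.2⟩⟩, ?_⟩
  apply SimpleGraph.Subgraph.ext
  · exact (Set.eq_univ_of_forall hsp).symm
  · funext x y
    apply propext
    constructor
    · rintro ⟨j, k, hk, hpD, hm⟩
      have hpres : H.Adj (lft j k) (rgt j k) := by
        by_cases hj : j = i0
        · subst hj; exact hi0 k hk
        · by_contra hnp
          have hne : k ≠ g j hj := hpD hj
          rcases lt_or_gt_of_ne hne with hlt | hgt
          · exact no2 j k (g j hj) hlt (hg1 j hj) hnp (hg2 j hj)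
          · exact no2 j (g j hj) k hgt hk (hg2 j hj) hnp
      rcases hm with ⟨h1, h2⟩ | ⟨h1, h2⟩
      · exact h1 ▸ h2 ▸ hpres
      · exact (h1 ▸ h2 ▸ hpres).symm
    · intro hxy
      obtain ⟨j, k, hk, hpH, hm⟩ := hUpH x y hxy
      refine ⟨j, k, hk, ?_, hm⟩
      intro hj he
      subst he
      exact hg2 j hj hpH

lemma Hsub_inj : Function.Injective (Hsub ha) := by
  intro d1 d2 h
  have hpres : ∀ j k, k < a j → (presD d1 j k ↔ presD d2 j k) := by
    intro j k hk
    rw [← Hsub_pres ha hk (d := d1), ← Hsub_pres ha hk (d := d2), h]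
  obtain ⟨i1, g1⟩ := d1
  obtain ⟨i2, g2⟩ := d2
  have hi : i1 = i2 := by
    by_contra hne
    have h1 : presD ⟨i1, g1⟩ i1 ((g2 ⟨i1, hne⟩ : Fin _) : ℕ) := fun h' => absurd rfl h'
    have h2 := (hpres i1 _ (g2 ⟨i1, hne⟩).isLt).mp h1
    exact h2 hne rfl
  subst hi
  have hg : g1 = g2 := by
    funext jp
    obtain ⟨j, hj⟩ := jp
    have h1 : ¬ presD ⟨i1, g1⟩ j ((g1 ⟨j, hj⟩ : Fin _) : ℕ) := fun hp => hp hj rfl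
    have h2 := mt (hpres j _ (g1 ⟨j, hj⟩).isLt).mpr h1
    unfold presD at h2
    push_neg at h2
    obtain ⟨h', e⟩ := h2
    exact Fin.val_injective e
  rw [hg]

end Theta

theorem theta_spanning_trees (n : ℕ) (hn : 2 ≤ n) (a : Fin n → ℕ) (ha : ∀ i, 2 ≤ a i) :
    spanningTreeCount (thetaGraph n a) = ∑ i : Fin n, ∏ j ∈ Finset.univ.erase i, a j := by
  classical
  unfold spanningTreeCount
  have hbij : Function.Bijective (fun d : Theta.Dat n a =>
      (⟨Theta.Hsub ha d, Theta.Hsub_spanning ha d, Theta.Hsub_isTree ha d⟩ :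
        {H : (thetaGraph n a).Subgraph // H.IsSpanning ∧ H.coe.IsTree})) := by
    constructor
    · intro d1 d2 h
      exact Theta.Hsub_inj ha (congrArg Subtype.val h)
    · rintro ⟨H, hsp, ht⟩
      obtain ⟨d, hd⟩ := Theta.Hsub_surj ha H hsp ht
      exact ⟨d, Subtype.ext hd⟩
  rw [← Nat.card_eq_of_bijective _ hbij, Nat.card_eq_fintype_card, Fintype.card_sigma]
  refine Finset.sum_congr rfl (fun i _ => ?_)
  rw [Fintype.card_pi]
  simp only [Fintype.card_fin]
  exact (Finset.prod_subtype _ (by simp) a).symm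
end
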